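/- arXiv:2405.07114 — 4 statements merged into one kernel-verified Lean document; each statement's English description precedes it below -/
import Mathlib

section
/- Let M be an o-minimal structure and (X, τ) a definable topological space. Any finite union of DSC_τ subsets of X is DSC_τ. In particular, (X, τ) is definably second-countable if and only if X admits a finite covering by DSC_τ sets. -/
open FirstOrder Set TopologicalSpace

/-- The fiber of a set `T ⊆ M^(β ⊕ α)` over an index tuple `b : β → M`. -/
def fiberAt {M : Type*} {α β : Type*} (T : Set ((β ⊕ α) → M)) (b : β → M) :
    Set (α → M) :=
  {a | Sum.elim b a ∈ T}

/-- A subset of a linear order which is a single point, an open (possibly unbounded)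
interval, or the whole line. -/
def IsIntervalOrPoint {M : Type*} [LinearOrder M] (s : Set M) : Prop :=
  (∃ a, s = {a}) ∨ (∃ a b, s = Set.Ioo a b) ∨ (∃ a, s = Set.Ioi a) ∨
    (∃ b, s = Set.Iio b) ∨ s = Set.univ

/-- `M` is an o-minimal structure: the order is definable (with parameters), and every
definable subset of `M` is a finite union of points and open intervals. -/
def IsOMinimal (L : FirstOrder.Language) (M : Type*) [L.Structure M] [LinearOrder M] : Prop :=
  Set.Definable (Set.univ : Set M) L {p : Fin 2 → M | p 0 < p 1} ∧
  ∀ s : Set (Fin 1 → M), Set.Definable (Set.univ : Set M) L s →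
    ∃ t : Finset (Set M), (∀ u ∈ t, IsIntervalOrPoint u) ∧
      (fun v : Fin 1 → M => v 0) '' s = ⋃ u ∈ t, (u : Set M)

/-- The o-minimal dimension of `X ⊆ M^α`: the largest `k` such that the projection of `X`
to some `k` coordinates has nonempty interior (in the product of the order topology on `M`);
it is `⊥` exactly when `X` is empty. -/
noncomputable def odim {M : Type*} [TopologicalSpace M] {α : Type*} (X : Set (α → M)) :
    WithBot ℕ∞ :=
  sSup {d : WithBot ℕ∞ | ∃ k : ℕ, d = ((k : ℕ∞) : WithBot ℕ∞) ∧
    ∃ ρ : Fin k → α, Function.Injective ρ ∧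
      (interior ((fun (x : α → M) (i : Fin k) => x (ρ i)) '' X)).Nonempty}

/-- `(X, τ)` is a definable topological space: `X` is a definable set and `τ` admits a basis
which is a definable family of sets. -/
def IsDefTopSpace (L : FirstOrder.Language) {M : Type*} [L.Structure M] {n : ℕ}
    (X : Set (Fin n → M)) (τ : TopologicalSpace ↥X) : Prop :=
  Set.Definable (Set.univ : Set M) L X ∧
  ∃ (k : ℕ) (B : Set (Fin k → M)) (T : Set ((Fin k ⊕ Fin n) → M)),
    Set.Definable (Set.univ : Set M) L B ∧ Set.Definable (Set.univ : Set M) L T ∧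
    (∀ b ∈ B, fiberAt T b ⊆ X) ∧
    @TopologicalSpace.IsTopologicalBasis ↥X τ
      ((fun b => (Subtype.val ⁻¹' fiberAt T b : Set ↥X)) '' B)

/-- `(X, τ)` is definably separable: there is no infinite definable family of pairwise
disjoint `τ`-open sets. -/
def DefSeparable (L : FirstOrder.Language) {M : Type*} [L.Structure M] {n : ℕ}
    (X : Set (Fin n → M)) (τ : TopologicalSpace ↥X) : Prop :=
  ¬ ∃ (k : ℕ) (B : Set (Fin k → M)) (T : Set ((Fin k ⊕ Fin n) → M)),
      Set.Definable (Set.univ : Set M) L B ∧ Set.Definable (Set.univ : Set M) L T ∧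
      (∀ b ∈ B, fiberAt T b ⊆ X ∧ τ.IsOpen (Subtype.val ⁻¹' fiberAt T b)) ∧
      (∀ b ∈ B, ∀ c ∈ B, fiberAt T b ≠ fiberAt T c →
        Disjoint (fiberAt T b) (fiberAt T c)) ∧
      {s : Set (Fin n → M) | ∃ b ∈ B, s = fiberAt T b}.Infinite

/-- `(X, τ)` is definably second-countable: there is a definable basis `{U_b : b ∈ B}` for
`τ` such that for every `x ∈ X` and `b ∈ B` with `x ∈ U_b`,
`dim {c ∈ B : x ∈ U_c ⊆ U_b} = dim B`. -/
def DefSecondCountable (L : FirstOrder.Language) {M : Type*} [L.Structure M]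
    [TopologicalSpace M] {n : ℕ} (X : Set (Fin n → M)) (τ : TopologicalSpace ↥X) : Prop :=
  ∃ (k : ℕ) (B : Set (Fin k → M)) (T : Set ((Fin k ⊕ Fin n) → M)),
    Set.Definable (Set.univ : Set M) L B ∧ Set.Definable (Set.univ : Set M) L T ∧
    (∀ b ∈ B, fiberAt T b ⊆ X) ∧
    @TopologicalSpace.IsTopologicalBasis ↥X τ
      ((fun b => (Subtype.val ⁻¹' fiberAt T b : Set ↥X)) '' B) ∧
    ∀ x ∈ X, ∀ b ∈ B, x ∈ fiberAt T b →
      odim {c | c ∈ B ∧ x ∈ fiberAt T c ∧ fiberAt T c ⊆ fiberAt T b} = odim B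

/-- `Y ⊆ X` is `DSC_τ`: `Y` is definable and admits a definable `τ`-basis
`{U_b : b ∈ B}` such that for every `y ∈ Y` and `b ∈ B` with `y ∈ U_b`,
`dim {c ∈ B : y ∈ U_c ⊆ U_b} = dim B`. -/
def IsDSC (L : FirstOrder.Language) {M : Type*} [L.Structure M] [TopologicalSpace M] {n : ℕ}
    (X : Set (Fin n → M)) (τ : TopologicalSpace ↥X) (Y : Set (Fin n → M)) : Prop :=
  Y ⊆ X ∧ Set.Definable (Set.univ : Set M) L Y ∧
  ∃ (k : ℕ) (B : Set (Fin k → M)) (T : Set ((Fin k ⊕ Fin n) → M)),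
    Set.Definable (Set.univ : Set M) L B ∧ Set.Definable (Set.univ : Set M) L T ∧
    (∀ b ∈ B, fiberAt T b ⊆ X ∧ τ.IsOpen (Subtype.val ⁻¹' fiberAt T b)) ∧
    (∀ y ∈ Y, ∀ A : Set (Fin n → M), A ⊆ X → τ.IsOpen (Subtype.val ⁻¹' A) → y ∈ A →
      ∃ b ∈ B, y ∈ fiberAt T b ∧ fiberAt T b ⊆ A) ∧
    ∀ y ∈ Y, ∀ b ∈ B, y ∈ fiberAt T b →
      odim {c | c ∈ B ∧ y ∈ fiberAt T c ∧ fiberAt T c ⊆ fiberAt T b} = odim B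

set_option linter.unusedSectionVars false
set_option maxHeartbeats 1000000

namespace ODimAux

variable {M : Type*} [TopologicalSpace M] {α β γ δ : Type*}

/-- projection of a set of tuples along a coordinate map -/
def pmap (τ : γ → α) (X : Set (α → M)) : Set (γ → M) :=
  (fun (x : α → M) (i : γ) => x (τ i)) '' X

def dimSet (X : Set (α → M)) : Set (WithBot ℕ∞) :=
  {d : WithBot ℕ∞ | ∃ k : ℕ, d = ((k : ℕ∞) : WithBot ℕ∞) ∧
    ∃ ρ : Fin k → α, Function.Injective ρ ∧ (interior (pmap ρ X)).Nonempty}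

/-- precomposition with a coordinate bijection, as a homeomorphism -/
def compHomeo (e : α ≃ β) : (β → M) ≃ₜ (α → M) where
  toFun g := g ∘ e
  invFun f := f ∘ e.symm
  left_inv g := funext fun b => by simp
  right_inv f := funext fun a => by simp
  continuous_toFun := continuous_pi fun a => continuous_apply (e a)
  continuous_invFun := continuous_pi fun b => continuous_apply (e.symm b)

/-- reindexing a set of tuples by a bijection of coordinates -/
def reSet (e : α ≃ β) (X : Set (α → M)) : Set (β → M) :=
  {g : β → M | g ∘ e ∈ X}

lemma reSet_eq_preimage (e : α ≃ β) (X : Set (α → M)) :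
    reSet e X = (compHomeo (M := M) e) ⁻¹' X := rfl

lemma interior_reSet_nonempty_iff (e : α ≃ β) (X : Set (α → M)) :
    (interior (reSet e X)).Nonempty ↔ (interior X).Nonempty := by
  rw [reSet_eq_preimage, ← Homeomorph.preimage_interior]
  constructor
  · rintro ⟨g, hg⟩; exact ⟨_, hg⟩
  · rintro ⟨x, hx⟩
    exact ⟨(compHomeo (M := M) e).symm x, by simpa using hx⟩

def prodSet (A : Set (α → M)) (B : Set (β → M)) : Set ((α ⊕ β) → M) :=
  {f | f ∘ Sum.inl ∈ A ∧ f ∘ Sum.inr ∈ B}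

def sumHomeo : ((α ⊕ β) → M) ≃ₜ (α → M) × (β → M) where
  toFun f := (f ∘ Sum.inl, f ∘ Sum.inr)
  invFun p := Sum.elim p.1 p.2
  left_inv f := funext fun x => by cases x <;> rfl
  right_inv p := rfl
  continuous_toFun := Continuous.prodMk (continuous_pi fun a => continuous_apply _)
    (continuous_pi fun b => continuous_apply _)
  continuous_invFun := continuous_pi fun x => by
    cases x with
    | inl a => exact (continuous_apply a).comp continuous_fst
    | inr b => exact (continuous_apply b).comp continuous_snd

lemma image_sumHomeo_prodSet (A : Set (α → M)) (B : Set (β → M)) :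
    (sumHomeo (M := M)) '' prodSet A B = A ×ˢ B := by
  ext ⟨u, v⟩
  constructor
  · rintro ⟨f, ⟨hA, hB⟩, heq⟩
    rw [← heq]; exact ⟨hA, hB⟩
  · rintro ⟨hu, hv⟩
    exact ⟨Sum.elim u v, ⟨hu, hv⟩, rfl⟩

lemma interior_prodSet_nonempty_iff (A : Set (α → M)) (B : Set (β → M)) :
    (interior (prodSet A B)).Nonempty ↔ (interior A).Nonempty ∧ (interior B).Nonempty := by
  have h1 : (interior (prodSet A B)).Nonempty ↔
      ((sumHomeo (M := M)) '' (interior (prodSet A B))).Nonempty := by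
    exact ⟨fun ⟨x, hx⟩ => ⟨_, ⟨x, hx, rfl⟩⟩, fun ⟨y, x, hx, _⟩ => ⟨x, hx⟩⟩
  rw [h1, Homeomorph.image_interior, image_sumHomeo_prodSet, interior_prod_eq,
    prod_nonempty_iff]


lemma pmap_comp (u : δ → α) (v : γ → δ) (X : Set (α → M)) :
    pmap (u ∘ v) X = pmap v (pmap u X) := by
  ext g
  constructor
  · rintro ⟨x, hx, rfl⟩; exact ⟨_, ⟨x, hx, rfl⟩, rfl⟩
  · rintro ⟨y, ⟨x, hx, rfl⟩, rfl⟩; exact ⟨x, hx, rfl⟩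

lemma pmap_equiv (e : γ ≃ α) (X : Set (α → M)) : pmap (⇑e) X = reSet e.symm X := by
  ext g
  constructor
  · rintro ⟨x, hx, rfl⟩
    show (fun i => _) ∘ ⇑e.symm ∈ X
    have : ((fun i => x (e i)) ∘ ⇑e.symm) = x := funext fun a => by simp
    rwa [this]
  · intro hg
    exact ⟨g ∘ e.symm, hg, funext fun i => by simp⟩

lemma pmap_sumMap (ρ : γ → α) (σ : δ → β) (A : Set (α → M)) (B : Set (β → M)) :
    pmap (Sum.map ρ σ) (prodSet A B) = prodSet (pmap ρ A) (pmap σ B) := by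
  ext g
  constructor
  · rintro ⟨f, ⟨hA, hB⟩, rfl⟩
    exact ⟨⟨f ∘ Sum.inl, hA, rfl⟩, ⟨f ∘ Sum.inr, hB, rfl⟩⟩
  · rintro ⟨⟨a, ha, hga⟩, ⟨b, hb, hgb⟩⟩
    refine ⟨Sum.elim a b, ⟨ha, hb⟩, ?_⟩
    funext i
    cases i with
    | inl c => exact congr_fun hga c
    | inr d => exact congr_fun hgb d



lemma odim_def (X : Set (α → M)) : odim X = sSup (dimSet X) := rfl

lemma dimSet_mono {X Y : Set (α → M)} (h : X ⊆ Y) : dimSet (M := M) X ⊆ dimSet Y := by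
  rintro d ⟨k, rfl, ρ, hρ, hint⟩
  exact ⟨k, rfl, ρ, hρ, hint.mono (interior_mono (image_mono h))⟩

lemma odim_mono {X Y : Set (α → M)} (h : X ⊆ Y) : odim X ≤ odim Y :=
  sSup_le_sSup (dimSet_mono h)

lemma zero_mem_dimSet {X : Set (α → M)} (hX : X.Nonempty) :
    (((0 : ℕ) : ℕ∞) : WithBot ℕ∞) ∈ dimSet X := by
  obtain ⟨x, hx⟩ := hX
  refine ⟨0, rfl, Fin.elim0, fun a => a.elim0, ?_⟩
  have : pmap (M := M) (Fin.elim0) X = univ := by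
    apply eq_univ_of_forall
    intro y
    exact ⟨x, hx, Subsingleton.elim _ _⟩
  rw [this, interior_univ]
  exact univ_nonempty

lemma dimSet_finite [Finite α] (X : Set (α → M)) : (dimSet X).Finite := by
  apply (((finite_Iic (Nat.card α)).image
    (fun k : ℕ => ((k : ℕ∞) : WithBot ℕ∞)))).subset
  rintro d ⟨k, rfl, ρ, hρ, hint⟩
  refine ⟨k, ?_, rfl⟩
  simpa using Nat.card_le_card_of_injective ρ hρ

lemma odim_mem_dimSet [Finite α] {X : Set (α → M)} (hX : X.Nonempty) :
    odim X ∈ dimSet X :=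
  Set.Nonempty.csSup_mem ⟨_, zero_mem_dimSet hX⟩ (dimSet_finite X)

lemma le_odim_of_mem {X : Set (α → M)} {d} (h : d ∈ dimSet X) : d ≤ odim X := le_sSup h

lemma odim_nonneg {X : Set (α → M)} (hX : X.Nonempty) : 0 ≤ odim X := by
  simpa using le_odim_of_mem (zero_mem_dimSet hX)

lemma odim_prodSet_ge [Finite α] [Finite β] {A : Set (α → M)} {B : Set (β → M)}
    (hA : A.Nonempty) (hB : B.Nonempty) :
    odim A + odim B ≤ odim (prodSet A B) := by
  obtain ⟨k₁, hk₁, ρ, hρ, hρint⟩ := odim_mem_dimSet hA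
  obtain ⟨k₂, hk₂, σ, hσ, hσint⟩ := odim_mem_dimSet hB
  rw [hk₁, hk₂]
  have hmem : (((k₁ + k₂ : ℕ) : ℕ∞) : WithBot ℕ∞) ∈ dimSet (prodSet A B) := by
    refine ⟨k₁ + k₂, rfl, Sum.map ρ σ ∘ ⇑finSumFinEquiv.symm,
      (hρ.sumMap hσ).comp (Equiv.injective _), ?_⟩
    have h1 : pmap (M := M) (Sum.map ρ σ ∘ ⇑finSumFinEquiv.symm) (prodSet A B)
        = reSet (finSumFinEquiv.symm).symm (pmap (Sum.map ρ σ) (prodSet A B)) := by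
      rw [pmap_comp, pmap_equiv]
    rw [h1, interior_reSet_nonempty_iff, pmap_sumMap, interior_prodSet_nonempty_iff]
    exact ⟨hρint, hσint⟩
  have hcast : (((k₁ + k₂ : ℕ) : ℕ∞) : WithBot ℕ∞)
      = ((k₁ : ℕ∞) : WithBot ℕ∞) + ((k₂ : ℕ∞) : WithBot ℕ∞) := by
    push_cast
    rfl
  rw [← hcast]
  exact le_odim_of_mem hmem

lemma odim_prodSet_le [Finite α] [Finite β] (A : Set (α → M)) (B : Set (β → M)) :
    odim (prodSet A B) ≤ odim A + odim B := by
  apply sSup_le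
  rintro d ⟨k, rfl, τ, hτ, hint⟩
  classical
  set p : Fin k → Prop := fun i => (τ i).isLeft with hp
  set e : {i // p i} ⊕ {i // ¬ p i} ≃ Fin k := Equiv.sumCompl p with he
  have hL : ∀ i : {i // p i}, ∃ a, τ i.1 = Sum.inl a := by
    rintro ⟨i, hi⟩
    exact Sum.isLeft_iff.1 hi
  have hR : ∀ i : {i // ¬ p i}, ∃ b, τ i.1 = Sum.inr b := by
    rintro ⟨i, hi⟩
    exact Sum.isRight_iff.1 (Sum.not_isLeft.1 hi)
  set ρ : {i // p i} → α := fun i => (hL i).choose with hρdef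
  set σ : {i // ¬ p i} → β := fun i => (hR i).choose with hσdef
  have hρspec : ∀ i, τ i.1 = Sum.inl (ρ i) := fun i => (hL i).choose_spec
  have hσspec : ∀ i, τ i.1 = Sum.inr (σ i) := fun i => (hR i).choose_spec
  have hρinj : Function.Injective ρ := by
    intro i j h
    apply Subtype.ext
    apply hτ
    rw [hρspec i, hρspec j, h]
  have hσinj : Function.Injective σ := by
    intro i j h
    apply Subtype.ext
    apply hτ
    rw [hσspec i, hσspec j, h]
  have hcomp : τ ∘ ⇑e = Sum.map ρ σ := by
    funext x
    cases x with
    | inl i => simp only [Function.comp_apply, he, Equiv.sumCompl_apply_inl, Sum.map_inl,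
        hρspec i]
    | inr i => simp only [Function.comp_apply, he, Equiv.sumCompl_apply_inr, Sum.map_inr,
        hσspec i]
  have h2 : (interior (pmap (τ ∘ ⇑e) (prodSet A B))).Nonempty := by
    have : pmap (M := M) (τ ∘ ⇑e) (prodSet A B) = reSet e.symm (pmap τ (prodSet A B)) := by
      rw [pmap_comp, pmap_equiv]
    rw [this, interior_reSet_nonempty_iff]
    exact hint
  rw [hcomp, pmap_sumMap, interior_prodSet_nonempty_iff] at h2
  obtain ⟨hA', hB'⟩ := h2
  set m₁ := Fintype.card {i // p i} with hm₁
  set m₂ := Fintype.card {i // ¬ p i} with hm₂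
  have e₁ : Fin m₁ ≃ {i // p i} := (Fintype.equivFin _).symm
  have e₂ : Fin m₂ ≃ {i // ¬ p i} := (Fintype.equivFin _).symm
  have hmem₁ : (((m₁ : ℕ) : ℕ∞) : WithBot ℕ∞) ∈ dimSet A := by
    refine ⟨m₁, rfl, ρ ∘ ⇑e₁, hρinj.comp e₁.injective, ?_⟩
    have : pmap (M := M) (ρ ∘ ⇑e₁) A = reSet e₁.symm (pmap ρ A) := by
      rw [pmap_comp, pmap_equiv]
    rw [this, interior_reSet_nonempty_iff]
    exact hA'
  have hmem₂ : (((m₂ : ℕ) : ℕ∞) : WithBot ℕ∞) ∈ dimSet B := by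
    refine ⟨m₂, rfl, σ ∘ ⇑e₂, hσinj.comp e₂.injective, ?_⟩
    have : pmap (M := M) (σ ∘ ⇑e₂) B = reSet e₂.symm (pmap σ B) := by
      rw [pmap_comp, pmap_equiv]
    rw [this, interior_reSet_nonempty_iff]
    exact hB'
  have hk : m₁ + m₂ = k := by
    have h := Fintype.card_congr e
    rw [Fintype.card_sum, Fintype.card_fin] at h
    exact h
  have hcast : ((k : ℕ∞) : WithBot ℕ∞)
      = ((m₁ : ℕ∞) : WithBot ℕ∞) + ((m₂ : ℕ∞) : WithBot ℕ∞) := by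
    rw [← hk]
    push_cast
    rfl
  rw [hcast]
  exact add_le_add (le_odim_of_mem hmem₁) (le_odim_of_mem hmem₂)

lemma odim_fin1 [LinearOrder M] [OrderTopology M] [DenselyOrdered M] [Nontrivial M]
    {F : Set (Fin 1 → M)} (hfin : F.Finite) (hne : F.Nonempty) : odim F = 0 := by
  apply le_antisymm
  · apply sSup_le
    rintro d ⟨k, rfl, ρ, hρ, hint⟩
    have hk : k ≤ 1 := by
      have := Fintype.card_le_of_injective ρ hρ
      simpa using this
    interval_cases k
    · simp
    · exfalso
      have hfin' : (pmap ρ F).Finite := hfin.image _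
      have himg : ((Homeomorph.funUnique (Fin 1) M) '' interior (pmap ρ F)).Nonempty :=
        hint.image _
      rw [Homeomorph.image_interior] at himg
      obtain ⟨x, hx⟩ := himg
      obtain ⟨a, b, hab, hsub⟩ := isOpen_interior.exists_Ioo_subset ⟨x, hx⟩
      exact (Set.infinite_coe_iff.1 (Set.Ioo.infinite hab))
        ((hfin'.image _).subset (hsub.trans interior_subset))
  · exact odim_nonneg hne

lemma reSet_eq_pmap (e : α ≃ β) (X : Set (α → M)) : reSet e X = pmap (⇑e.symm) X := by
  rw [pmap_equiv e.symm X, Equiv.symm_symm]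

lemma dimSet_reSet (e : α ≃ β) (X : Set (α → M)) : dimSet (reSet e X) = dimSet X := by
  ext d
  constructor
  · rintro ⟨k, rfl, ρ, hρ, hint⟩
    refine ⟨k, rfl, ⇑e.symm ∘ ρ, e.symm.injective.comp hρ, ?_⟩
    rwa [pmap_comp, ← reSet_eq_pmap]
  · rintro ⟨k, rfl, σ, hσ, hint⟩
    refine ⟨k, rfl, ⇑e ∘ σ, e.injective.comp hσ, ?_⟩
    have : (⇑e.symm ∘ (⇑e ∘ σ)) = σ := funext fun i => by simp
    rw [reSet_eq_pmap, ← pmap_comp, this]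
    exact hint

lemma odim_reSet (e : α ≃ β) (X : Set (α → M)) : odim (reSet e X) = odim X := by
  rw [odim_def, odim_def, dimSet_reSet]

lemma prodSet_nonempty {A : Set (α → M)} {B : Set (β → M)} (hA : A.Nonempty)
    (hB : B.Nonempty) : (prodSet A B).Nonempty := by
  obtain ⟨a, ha⟩ := hA
  obtain ⟨b, hb⟩ := hB
  exact ⟨Sum.elim a b, ha, hb⟩

end ODimAux

section UnionLemma

open ODimAux

lemma definable_coord_eq {L : FirstOrder.Language} {M : Type*} [L.Structure M]
    {α : Type*} (p : M) (i : α) :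
    Set.Definable (Set.univ : Set M) L {h : α → M | h i = p} := by
  refine ⟨Language.Term.equal (Language.Term.var i) ((L.con ⟨p, mem_univ p⟩).term), ?_⟩
  ext h
  rw [mem_setOf_eq, mem_setOf_eq, Language.Formula.realize_equal, Language.Term.realize_con,
    Language.Term.realize_var]

lemma fin1_coord_eq_finite {M : Type*} (p : M) : {h : Fin 1 → M | h 0 = p}.Finite := by
  apply (Set.finite_singleton (fun _ : Fin 1 => p)).subset
  intro h hh
  have : h = fun _ => p := funext fun i => by rw [Fin.eq_zero i]; exact hh
  simp [this]

lemma isDSC_union {L : FirstOrder.Language} {M : Type*} [L.Structure M] [LinearOrder M]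
    [DenselyOrdered M] [NoMinOrder M] [NoMaxOrder M] [Nonempty M]
    [TopologicalSpace M] [OrderTopology M] {n : ℕ}
    {X : Set (Fin n → M)} {τ : TopologicalSpace ↥X}
    {Y₁ Y₂ : Set (Fin n → M)} (h₁ : IsDSC L X τ Y₁) (h₂ : IsDSC L X τ Y₂) :
    IsDSC L X τ (Y₁ ∪ Y₂) := by
  classical
  have : Nontrivial M := by
    obtain ⟨b, hb⟩ := exists_gt (Classical.arbitrary M)
    exact ⟨Classical.arbitrary M, b, ne_of_lt hb⟩
  by_cases hY₁e : Y₁ = ∅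
  · rw [hY₁e, empty_union]; exact h₂
  by_cases hY₂e : Y₂ = ∅
  · rw [hY₂e, union_empty]; exact h₁
  have hY₁ne : Y₁.Nonempty := nonempty_iff_ne_empty.2 hY₁e
  have hY₂ne : Y₂.Nonempty := nonempty_iff_ne_empty.2 hY₂e
  obtain ⟨hY₁X, hY₁def, k₁, B₁, T₁, hB₁def, hT₁def, hBprop₁, hnbhd₁, hdsc₁⟩ := h₁
  obtain ⟨hY₂X, hY₂def, k₂, B₂, T₂, hB₂def, hT₂def, hBprop₂, hnbhd₂, hdsc₂⟩ := h₂
  have hXopen : τ.IsOpen (Subtype.val ⁻¹' X) := by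
    have hXu : (Subtype.val ⁻¹' X : Set ↥X) = univ := eq_univ_of_forall fun z => z.2
    rw [hXu]
    exact τ.isOpen_univ
  have hB₁ne : B₁.Nonempty := by
    obtain ⟨y, hy⟩ := hY₁ne
    obtain ⟨b, hb, -⟩ := hnbhd₁ y hy X Subset.rfl hXopen (hY₁X hy)
    exact ⟨b, hb⟩
  have hB₂ne : B₂.Nonempty := by
    obtain ⟨y, hy⟩ := hY₂ne
    obtain ⟨b, hb, -⟩ := hnbhd₂ y hy X Subset.rfl hXopen (hY₂X hy)
    exact ⟨b, hb⟩
  obtain ⟨p, q, hpq⟩ := exists_pair_ne M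
  set k := 1 + (k₁ + k₂) with hk
  set E : (Fin 1 ⊕ (Fin k₁ ⊕ Fin k₂)) ≃ Fin k :=
    (Equiv.sumCongr (Equiv.refl (Fin 1)) finSumFinEquiv).trans finSumFinEquiv with hE
  set tag0 : Fin k := E (Sum.inl 0) with htag0
  set inc₁ : Fin k₁ → Fin k := fun i => E (Sum.inr (Sum.inl i)) with hinc₁
  set inc₂ : Fin k₂ → Fin k := fun i => E (Sum.inr (Sum.inr i)) with hinc₂
  set B : Set (Fin k → M) :=
    {f : Fin k → M | (f tag0 = p ∨ f tag0 = q) ∧ f ∘ inc₁ ∈ B₁ ∧ f ∘ inc₂ ∈ B₂} with hB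
  set T : Set ((Fin k ⊕ Fin n) → M) :=
    {g : (Fin k ⊕ Fin n) → M |
      (g (Sum.inl tag0) = p ∧ g ∘ Sum.map inc₁ id ∈ T₁) ∨
      (g (Sum.inl tag0) = q ∧ g ∘ Sum.map inc₂ id ∈ T₂)} with hT
  -- fiber computations
  have hcomp₁ : ∀ (f : Fin k → M) (a : Fin n → M),
      Sum.elim f a ∘ Sum.map inc₁ (id : Fin n → Fin n) = Sum.elim (f ∘ inc₁) a :=
    fun f a => funext fun x => by cases x <;> rfl
  have hcomp₂ : ∀ (f : Fin k → M) (a : Fin n → M),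
      Sum.elim f a ∘ Sum.map inc₂ (id : Fin n → Fin n) = Sum.elim (f ∘ inc₂) a :=
    fun f a => funext fun x => by cases x <;> rfl
  have hfib₁ : ∀ f : Fin k → M, f tag0 = p → fiberAt T f = fiberAt T₁ (f ∘ inc₁) := by
    intro f hf
    ext a
    show (Sum.elim f a ∈ T) ↔ _
    rw [hT]
    simp only [mem_setOf_eq, Sum.elim_inl, hcomp₁, hcomp₂, hf, hpq, true_and, false_and,
      or_false, false_or]
    rfl
  have hfib₂ : ∀ f : Fin k → M, f tag0 = q → fiberAt T f = fiberAt T₂ (f ∘ inc₂) := by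
    intro f hf
    ext a
    show (Sum.elim f a ∈ T) ↔ _
    rw [hT]
    simp only [mem_setOf_eq, Sum.elim_inl, hcomp₁, hcomp₂, hf, Ne.symm hpq, true_and,
      false_and, or_false, false_or]
    rfl
  -- the tuple-building function
  set mk : M → (Fin k₁ → M) → (Fin k₂ → M) → (Fin k → M) :=
    fun t b₁ b₂ => (Sum.elim (fun _ => t) (Sum.elim b₁ b₂)) ∘ ⇑E.symm with hmk
  have hmk_tag : ∀ t b₁ b₂, mk t b₁ b₂ tag0 = t := by
    intro t b₁ b₂
    simp [hmk, htag0]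
  have hmk₁ : ∀ t b₁ b₂, mk t b₁ b₂ ∘ inc₁ = b₁ := by
    intro t b₁ b₂
    funext i
    simp [hmk, hinc₁]
  have hmk₂ : ∀ t b₁ b₂, mk t b₁ b₂ ∘ inc₂ = b₂ := by
    intro t b₁ b₂
    funext i
    simp [hmk, hinc₂]
  refine ⟨union_subset hY₁X hY₂X, hY₁def.union hY₂def, k, B, T, ?_, ?_, ?_, ?_, ?_⟩
  · -- definability of B
    have hBeq : B = (({f : Fin k → M | f tag0 = p} ∪ {f : Fin k → M | f tag0 = q}) ∩
        (((fun g : Fin k → M => g ∘ inc₁) ⁻¹' B₁) ∩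
          ((fun g : Fin k → M => g ∘ inc₂) ⁻¹' B₂))) := by
      ext f
      rfl
    have hp1 : {f : Fin k → M | f tag0 = p}
        = (fun g : Fin k → M => g ∘ (fun _ : Fin 1 => tag0)) ⁻¹' {h : Fin 1 → M | h 0 = p} :=
      rfl
    have hq1 : {f : Fin k → M | f tag0 = q}
        = (fun g : Fin k → M => g ∘ (fun _ : Fin 1 => tag0)) ⁻¹' {h : Fin 1 → M | h 0 = q} :=
      rfl
    rw [hBeq, hp1, hq1]
    exact (((definable_coord_eq p 0).preimage_comp _).union
        ((definable_coord_eq q 0).preimage_comp _)).inter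
      ((hB₁def.preimage_comp inc₁).inter (hB₂def.preimage_comp inc₂))
  · -- definability of T
    have hTeq : T = ((((fun g : (Fin k ⊕ Fin n) → M => g ∘ (fun _ : Fin 1 => Sum.inl tag0)) ⁻¹'
          {h : Fin 1 → M | h 0 = p}) ∩
          ((fun g : (Fin k ⊕ Fin n) → M => g ∘ Sum.map inc₁ id) ⁻¹' T₁)) ∪
        (((fun g : (Fin k ⊕ Fin n) → M => g ∘ (fun _ : Fin 1 => Sum.inl tag0)) ⁻¹'
          {h : Fin 1 → M | h 0 = q}) ∩
          ((fun g : (Fin k ⊕ Fin n) → M => g ∘ Sum.map inc₂ id) ⁻¹' T₂))) := by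
      ext g
      rfl
    rw [hTeq]
    exact (((definable_coord_eq p 0).preimage_comp _).inter
        (hT₁def.preimage_comp _)).union
      (((definable_coord_eq q 0).preimage_comp _).inter (hT₂def.preimage_comp _))
  · -- fibers are subsets of X and open
    rintro f ⟨htag | htag, hf₁, hf₂⟩
    · rw [hfib₁ f htag]
      exact hBprop₁ _ hf₁
    · rw [hfib₂ f htag]
      exact hBprop₂ _ hf₂
  · -- neighborhood basis property
    rintro y (hy | hy) A hAX hAopen hyA
    · obtain ⟨b₁, hb₁, hyb, hsub⟩ := hnbhd₁ y hy A hAX hAopen hyA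
      obtain ⟨b₂, hb₂⟩ := hB₂ne
      refine ⟨mk p b₁ b₂, ⟨Or.inl (hmk_tag _ _ _), ?_, ?_⟩, ?_, ?_⟩
      · rw [hmk₁]; exact hb₁
      · rw [hmk₂]; exact hb₂
      · rw [hfib₁ _ (hmk_tag _ _ _), hmk₁]; exact hyb
      · rw [hfib₁ _ (hmk_tag _ _ _), hmk₁]; exact hsub
    · obtain ⟨b₂, hb₂, hyb, hsub⟩ := hnbhd₂ y hy A hAX hAopen hyA
      obtain ⟨b₁, hb₁⟩ := hB₁ne
      have htagq : mk q b₁ b₂ tag0 = q := hmk_tag _ _ _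
      refine ⟨mk q b₁ b₂, ⟨Or.inr htagq, ?_, ?_⟩, ?_, ?_⟩
      · rw [hmk₁]; exact hb₁
      · rw [hmk₂]; exact hb₂
      · rw [hfib₂ _ htagq, hmk₂]; exact hyb
      · rw [hfib₂ _ htagq, hmk₂]; exact hsub
  · -- the DSC dimension condition
    intro y hy f hf hyf
    obtain ⟨htagor, hfB₁, hfB₂⟩ := hf
    -- the key claim
    obtain ⟨t, D₁, D₂, hD₁ne, hD₂ne, hD₁dim, hD₂dim, hkey⟩ :
        ∃ (t : M) (D₁ : Set (Fin k₁ → M)) (D₂ : Set (Fin k₂ → M)),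
          D₁.Nonempty ∧ D₂.Nonempty ∧ odim D₁ = odim B₁ ∧ odim D₂ = odim B₂ ∧
          ∀ g : Fin k → M, g tag0 = t → g ∘ inc₁ ∈ D₁ → g ∘ inc₂ ∈ D₂ →
            g ∈ B ∧ y ∈ fiberAt T g ∧ fiberAt T g ⊆ fiberAt T f := by
      rcases htagor with htag | htag
      · -- tag of f is p : fiberAt T f = fiberAt T₁ (f ∘ inc₁)
        have hU := hfib₁ f htag
        rcases hy with hy | hy
        · -- y ∈ Y₁ : direct
          have hyb₁ : y ∈ fiberAt T₁ (f ∘ inc₁) := hU ▸ hyf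
          refine ⟨p, {c | c ∈ B₁ ∧ y ∈ fiberAt T₁ c ∧ fiberAt T₁ c ⊆ fiberAt T₁ (f ∘ inc₁)},
            B₂, ⟨f ∘ inc₁, hfB₁, hyb₁, Subset.rfl⟩, hB₂ne,
            hdsc₁ y hy _ hfB₁ hyb₁, rfl, ?_⟩
          intro g hgt hg₁ hg₂
          have hgfib := hfib₁ g hgt
          refine ⟨⟨Or.inl hgt, hg₁.1, hg₂⟩, ?_, ?_⟩
          · rw [hgfib]; exact hg₁.2.1
          · rw [hgfib, hU]; exact hg₁.2.2
        · -- y ∈ Y₂ : go through family 2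
          have hop := hBprop₁ _ hfB₁
          obtain ⟨b', hb', hyb', hsub'⟩ := hnbhd₂ y hy (fiberAt T₁ (f ∘ inc₁)) hop.1 hop.2
            (hU ▸ hyf)
          refine ⟨q, B₁, {c | c ∈ B₂ ∧ y ∈ fiberAt T₂ c ∧ fiberAt T₂ c ⊆ fiberAt T₂ b'},
            hB₁ne, ⟨b', hb', hyb', Subset.rfl⟩, rfl,
            hdsc₂ y hy _ hb' hyb', ?_⟩
          intro g hgt hg₁ hg₂
          have hgfib := hfib₂ g hgt
          refine ⟨⟨Or.inr hgt, hg₁, hg₂.1⟩, ?_, ?_⟩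
          · rw [hgfib]; exact hg₂.2.1
          · rw [hgfib, hU]; exact hg₂.2.2.trans hsub'
      · -- tag of f is q
        have hU := hfib₂ f htag
        rcases hy with hy | hy
        · -- y ∈ Y₁ : go through family 1
          have hop := hBprop₂ _ hfB₂
          obtain ⟨b', hb', hyb', hsub'⟩ := hnbhd₁ y hy (fiberAt T₂ (f ∘ inc₂)) hop.1 hop.2
            (hU ▸ hyf)
          refine ⟨p, {c | c ∈ B₁ ∧ y ∈ fiberAt T₁ c ∧ fiberAt T₁ c ⊆ fiberAt T₁ b'},
            B₂, ⟨b', hb', hyb', Subset.rfl⟩, hB₂ne,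
            hdsc₁ y hy _ hb' hyb', rfl, ?_⟩
          intro g hgt hg₁ hg₂
          have hgfib := hfib₁ g hgt
          refine ⟨⟨Or.inl hgt, hg₁.1, hg₂⟩, ?_, ?_⟩
          · rw [hgfib]; exact hg₁.2.1
          · rw [hgfib, hU]; exact hg₁.2.2.trans hsub'
        · -- y ∈ Y₂ : direct
          have hyb₂ : y ∈ fiberAt T₂ (f ∘ inc₂) := hU ▸ hyf
          refine ⟨q, B₁, {c | c ∈ B₂ ∧ y ∈ fiberAt T₂ c ∧ fiberAt T₂ c ⊆ fiberAt T₂ (f ∘ inc₂)},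
            hB₁ne, ⟨f ∘ inc₂, hfB₂, hyb₂, Subset.rfl⟩, rfl,
            hdsc₂ y hy _ hfB₂ hyb₂, ?_⟩
          intro g hgt hg₁ hg₂
          have hgfib := hfib₂ g hgt
          refine ⟨⟨Or.inr hgt, hg₁, hg₂.1⟩, ?_, ?_⟩
          · rw [hgfib]; exact hg₂.2.1
          · rw [hgfib, hU]; exact hg₂.2.2
    -- finish by a dimension squeeze
    set S : Set (Fin k → M) :=
      {g : Fin k → M | g tag0 = t ∧ g ∘ inc₁ ∈ D₁ ∧ g ∘ inc₂ ∈ D₂} with hS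
    have hSsub : S ⊆ {c | c ∈ B ∧ y ∈ fiberAt T c ∧ fiberAt T c ⊆ fiberAt T f} :=
      fun g hg => hkey g hg.1 hg.2.1 hg.2.2
    have hreS : S = reSet E (prodSet {h : Fin 1 → M | h 0 = t} (prodSet D₁ D₂)) := rfl
    have hreB : B = reSet E (prodSet {h : Fin 1 → M | h 0 = p ∨ h 0 = q}
        (prodSet B₁ B₂)) := rfl
    have hPt0 : odim {h : Fin 1 → M | h 0 = t} = 0 :=
      odim_fin1 (fin1_coord_eq_finite t) ⟨fun _ => t, rfl⟩
    have hPpq0 : odim {h : Fin 1 → M | h 0 = p ∨ h 0 = q} = 0 := by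
      refine odim_fin1 ?_ ⟨fun _ => p, Or.inl rfl⟩
      exact ((fin1_coord_eq_finite p).union (fin1_coord_eq_finite q)).subset
        (fun h hh => hh.elim Or.inl Or.inr)
    have hBup : odim B ≤ odim B₁ + odim B₂ := by
      rw [hreB, odim_reSet]
      calc odim (prodSet {h : Fin 1 → M | h 0 = p ∨ h 0 = q} (prodSet B₁ B₂))
          ≤ odim {h : Fin 1 → M | h 0 = p ∨ h 0 = q} + odim (prodSet B₁ B₂) :=
            odim_prodSet_le _ _
        _ ≤ 0 + (odim B₁ + odim B₂) := add_le_add (le_of_eq hPpq0) (odim_prodSet_le _ _)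
        _ = odim B₁ + odim B₂ := zero_add _
    have hSlow : odim B₁ + odim B₂ ≤ odim S := by
      rw [hreS, odim_reSet]
      calc odim B₁ + odim B₂ = 0 + (odim D₁ + odim D₂) := by
            rw [hD₁dim, hD₂dim, zero_add]
        _ ≤ odim {h : Fin 1 → M | h 0 = t} + odim (prodSet D₁ D₂) :=
            add_le_add (le_of_eq hPt0.symm) (odim_prodSet_ge hD₁ne hD₂ne)
        _ ≤ odim (prodSet {h : Fin 1 → M | h 0 = t} (prodSet D₁ D₂)) :=
            odim_prodSet_ge ⟨fun _ => t, rfl⟩ (prodSet_nonempty hD₁ne hD₂ne)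
    exact le_antisymm (odim_mono fun c hc => hc.1)
      (hBup.trans (hSlow.trans (odim_mono hSsub)))


lemma isDSC_empty {L : FirstOrder.Language} {M : Type*} [L.Structure M]
    [TopologicalSpace M] {n : ℕ} (X : Set (Fin n → M)) (τ : TopologicalSpace ↥X) :
    IsDSC L X τ (∅ : Set (Fin n → M)) :=
  ⟨empty_subset _, Set.definable_empty, 0, ∅, ∅, Set.definable_empty, Set.definable_empty,
    fun b hb => absurd hb (notMem_empty b),
    fun y hy => absurd hy (notMem_empty y),
    fun y hy => absurd hy (notMem_empty y)⟩

end UnionLemma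

/-- In an o-minimal structure, any finite union of `DSC_τ` subsets of a
definable topological space `(X, τ)` is `DSC_τ`; in particular `(X, τ)` is definably
second-countable if and only if `X` admits a finite covering by `DSC_τ` sets. -/
theorem isDSC_finite_union_and_defSecondCountable_iff
    {L : FirstOrder.Language} {M : Type*} [L.Structure M] [LinearOrder M]
    [DenselyOrdered M] [NoMinOrder M] [NoMaxOrder M] [Nonempty M]
    [TopologicalSpace M] [OrderTopology M]
    (hM : IsOMinimal L M) {n : ℕ}
    (X : Set (Fin n → M)) (τ : TopologicalSpace ↥X) (hdts : IsDefTopSpace L X τ) :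
    (∀ 𝒴 : Finset (Set (Fin n → M)), (∀ Y ∈ 𝒴, IsDSC L X τ Y) →
      IsDSC L X τ (⋃ Y ∈ 𝒴, Y)) ∧
    (DefSecondCountable L X τ ↔
      ∃ 𝒴 : Finset (Set (Fin n → M)), (∀ Y ∈ 𝒴, IsDSC L X τ Y) ∧ X = ⋃ Y ∈ 𝒴, Y) := by
  classical
  have hpart1 : ∀ 𝒴 : Finset (Set (Fin n → M)), (∀ Y ∈ 𝒴, IsDSC L X τ Y) →
      IsDSC L X τ (⋃ Y ∈ 𝒴, Y) := by
    intro 𝒴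
    induction 𝒴 using Finset.induction_on with
    | empty =>
      intro _
      simp only [Finset.notMem_empty, iUnion_of_empty, iUnion_empty]
      exact isDSC_empty X τ
    | @insert a s ha ih =>
      intro h
      rw [Finset.set_biUnion_insert]
      exact isDSC_union (h a (Finset.mem_insert_self a s))
        (ih fun Y hY => h Y (Finset.mem_insert_of_mem hY))
  refine ⟨hpart1, ?_, ?_⟩
  · -- definably second countable → finite DSC cover
    rintro ⟨k, B, T, hBdef, hTdef, hfibX, hbasis, hdim⟩
    refine ⟨{X}, ?_, by simp⟩
    intro Y hY
    rw [Finset.mem_singleton] at hY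
    rw [hY]
    refine ⟨Subset.rfl, hdts.1, k, B, T, hBdef, hTdef, ?_, ?_, hdim⟩
    · intro b hb
      exact ⟨hfibX b hb, hbasis.isOpen ⟨b, hb, rfl⟩⟩
    · intro y hyX A hAX hAopen hyA
      obtain ⟨v, ⟨b, hb, rfl⟩, hyv, hvsub⟩ :=
        hbasis.exists_subset_of_mem_open
          (show (⟨y, hyX⟩ : ↥X) ∈ Subtype.val ⁻¹' A from hyA) hAopen
      refine ⟨b, hb, hyv, ?_⟩
      intro z hz
      have hzX : z ∈ X := hfibX b hb hz
      exact hvsub (show (⟨z, hzX⟩ : ↥X) ∈ _ from hz)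
  · -- finite DSC cover → definably second countable
    rintro ⟨𝒴, h𝒴, hXeq⟩
    have hX : IsDSC L X τ X := by
      have h := hpart1 𝒴 h𝒴
      rwa [← hXeq] at h
    obtain ⟨-, -, k, B, T, hBdef, hTdef, hprop, hnbhd, hdsc⟩ := hX
    refine ⟨k, B, T, hBdef, hTdef, fun b hb => (hprop b hb).1, ?_, hdsc⟩
    apply TopologicalSpace.isTopologicalBasis_of_isOpen_of_nhds
    · rintro u ⟨b, hb, rfl⟩
      exact (hprop b hb).2
    · intro a u hau huopen
      have h1 : Subtype.val '' u ⊆ X := by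
        rintro _ ⟨z, -, rfl⟩
        exact z.2
      have h2 : τ.IsOpen (Subtype.val ⁻¹' (Subtype.val '' u)) := by
        rwa [preimage_image_eq u Subtype.val_injective]
      obtain ⟨b, hb, hyb, hsub⟩ := hnbhd a.1 a.2 (Subtype.val '' u) h1 h2 ⟨a, hau, rfl⟩
      refine ⟨Subtype.val ⁻¹' fiberAt T b, ⟨b, hb, rfl⟩, hyb, ?_⟩
      intro z hz
      obtain ⟨w, hw, hwz⟩ := hsub hz
      exact Subtype.val_injective hwz ▸ hw
end

section
/- Let M be an o-minimal structure and (X, τ) a definable topological space. If there exists a finite covering {X_1, ..., X_n} of X by definable τ-open subsets such that each (X_i, τ|_{X_i}) is definably second-countable in the subspace topology, then (X, τ) is definably second-countable. -/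
open FirstOrder Set TopologicalSpace

-- === Auxiliary lemmas ===

set_option linter.unusedSectionVars false
set_option maxHeartbeats 1600000

section DimAux

variable {M : Type*} [TopologicalSpace M] {α β : Type*}

/-- Witness predicate for dimension at least `d`. -/
def HasDimW (S : Set (α → M)) (d : ℕ) : Prop :=
  ∃ ρ : Fin d → α, Function.Injective ρ ∧
    (interior ((fun (x : α → M) (i : Fin d) => x (ρ i)) '' S)).Nonempty

lemma odim_eq_sSup_hasDimW (S : Set (α → M)) :
    odim S = sSup {d : WithBot ℕ∞ | ∃ k : ℕ, d = ((k : ℕ∞) : WithBot ℕ∞) ∧ HasDimW S k} := rfl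

lemma HasDimW.nonempty {S : Set (α → M)} {d : ℕ} (h : HasDimW S d) : S.Nonempty := by
  obtain ⟨ρ, -, y, hy⟩ := h
  obtain ⟨x, hx, -⟩ := interior_subset hy
  exact ⟨x, hx⟩

lemma HasDimW.mono {S S' : Set (α → M)} {d : ℕ} (hss : S ⊆ S') (h : HasDimW S d) :
    HasDimW S' d := by
  obtain ⟨ρ, hρ, hne⟩ := h
  exact ⟨ρ, hρ, hne.mono (interior_mono (Set.image_mono hss))⟩

lemma hasDimW_zero {S : Set (α → M)} (h : S.Nonempty) : HasDimW S 0 := by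
  refine ⟨Fin.elim0, fun i => i.elim0, ?_⟩
  have himg : (fun (x : α → M) (i : Fin 0) => x (Fin.elim0 i)) '' S = Set.univ := by
    apply Set.eq_univ_of_forall
    intro y
    obtain ⟨x0, hx0⟩ := h
    exact ⟨x0, hx0, funext fun i => i.elim0⟩
  rw [himg, interior_univ]
  exact ⟨fun i => i.elim0, trivial⟩

lemma le_odim_of_hasDimW {S : Set (α → M)} {d : ℕ} (h : HasDimW S d) :
    ((d : ℕ∞) : WithBot ℕ∞) ≤ odim S :=
  le_sSup ⟨d, rfl, h⟩

lemma odim_le_of_hasDimW {S : Set (α → M)} {D : ℕ} (h : ∀ d, HasDimW S d → d ≤ D) :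
    odim S ≤ ((D : ℕ∞) : WithBot ℕ∞) := by
  refine sSup_le ?_
  rintro x ⟨k, rfl, hk⟩
  exact_mod_cast h k hk

lemma odim_eq_of_hasDimW {S : Set (α → M)} {D : ℕ} (h1 : HasDimW S D)
    (h2 : ∀ d, HasDimW S d → d ≤ D) : odim S = ((D : ℕ∞) : WithBot ℕ∞) :=
  le_antisymm (odim_le_of_hasDimW h2) (le_odim_of_hasDimW h1)

lemma HasDimW.le_card [Fintype α] {S : Set (α → M)} {d : ℕ} (h : HasDimW S d) :
    d ≤ Fintype.card α := by
  obtain ⟨ρ, hρ, -⟩ := h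
  simpa using Fintype.card_le_of_injective ρ hρ

lemma exists_maxDim [Fintype α] {S : Set (α → M)} (h : S.Nonempty) :
    ∃ D : ℕ, HasDimW S D ∧ (∀ d, HasDimW S d → d ≤ D) ∧
      odim S = ((D : ℕ∞) : WithBot ℕ∞) := by
  classical
  set D := Nat.findGreatest (fun d => HasDimW S d) (Fintype.card α) with hD
  have hspec : HasDimW S D := Nat.findGreatest_spec (Nat.zero_le _) (hasDimW_zero h)
  have hmax : ∀ d, HasDimW S d → d ≤ D := by
    intro d hd
    by_contra hlt
    push_neg at hlt
    exact Nat.findGreatest_is_greatest hlt hd.le_card hd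
  exact ⟨D, hspec, hmax, odim_eq_of_hasDimW hspec hmax⟩

lemma proj_image_reindex (q : α ≃ β) (S : Set (α → M)) {d : ℕ} (ρ' : Fin d → β) :
    (fun (f : β → M) (i : Fin d) => f (ρ' i)) '' ((fun g : β → M => g ∘ q) ⁻¹' S)
      = (fun (x : α → M) (i : Fin d) => x (q.symm (ρ' i))) '' S := by
  ext y
  constructor
  · rintro ⟨f, hf, rfl⟩
    exact ⟨f ∘ q, hf, by funext i; simp⟩
  · rintro ⟨x, hx, rfl⟩
    refine ⟨x ∘ q.symm, ?_, rfl⟩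
    simp only [Set.mem_preimage]
    have : (x ∘ ⇑q.symm) ∘ ⇑q = x := by funext a; simp
    rw [this]; exact hx

lemma hasDimW_reindex_iff (q : α ≃ β) (S : Set (α → M)) (d : ℕ) :
    HasDimW ((fun g : β → M => g ∘ q) ⁻¹' S) d ↔ HasDimW S d := by
  constructor
  · rintro ⟨ρ', hρ', hne⟩
    refine ⟨q.symm ∘ ρ', (q.symm.injective.comp hρ'), ?_⟩
    rwa [proj_image_reindex q S ρ'] at hne
  · rintro ⟨ρ, hρ, hne⟩
    refine ⟨q ∘ ρ, q.injective.comp hρ, ?_⟩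
    rw [proj_image_reindex q S (q ∘ ρ)]
    have : (fun (x : α → M) (i : Fin d) => x (q.symm ((q ∘ ρ) i)))
        = fun (x : α → M) (i : Fin d) => x (ρ i) := by
      funext x i; simp
    rw [this]
    exact hne

lemma odim_reindex (q : α ≃ β) (S : Set (α → M)) :
    odim ((fun g : β → M => g ∘ q) ⁻¹' S) = odim S := by
  rw [odim_eq_sSup_hasDimW, odim_eq_sSup_hasDimW]
  congr 1
  ext x
  simp only [Set.mem_setOf_eq, hasDimW_reindex_iff]

end DimAux

section TopoAux

variable {M : Type*} [TopologicalSpace M] {γ δ : Type*}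

lemma continuous_precomp (j : δ → γ) : Continuous (fun g : γ → M => g ∘ j) :=
  continuous_pi fun d => continuous_apply (j d)

lemma isOpenMap_precomp {j : δ → γ} (hj : Function.Injective j) :
    IsOpenMap (fun g : γ → M => g ∘ j) := by
  classical
  intro U hU
  rw [isOpen_pi_iff]
  rintro h ⟨g, hgU, rfl⟩
  obtain ⟨I, u, hIu, hpi⟩ := isOpen_pi_iff.1 hU g hgU
  refine ⟨I.preimage j hj.injOn, fun d => u (j d), ?_, ?_⟩
  · intro d hd
    rw [Finset.mem_preimage] at hd
    exact ⟨(hIu _ hd).1, (hIu _ hd).2⟩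
  · intro h' hh'
    refine ⟨fun x => if hx : ∃ d, j d = x then h' hx.choose else g x, ?_, ?_⟩
    · apply hpi
      intro x hxI
      by_cases hx : ∃ d, j d = x
      · simp only [dif_pos hx]
        have hjx : j hx.choose = x := hx.choose_spec
        have hmem : hx.choose ∈ I.preimage j hj.injOn := by
          rw [Finset.mem_preimage, hjx]; exact hxI
        have h3 := hh' hx.choose hmem
        simpa [hjx] using h3
      · simp only [dif_neg hx]
        exact (hIu x hxI).2
    · funext d
      have hx : ∃ d', j d' = j d := ⟨d, rfl⟩
      simp only [Function.comp_apply, dif_pos hx]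
      have : hx.choose = d := hj hx.choose_spec
      rw [this]

variable [LinearOrder M] [OrderTopology M] [DenselyOrdered M] [Nontrivial M]

lemma exists_apply_ne_of_isOpen {O : Set (γ → M)} (hO : IsOpen O) (hne : O.Nonempty)
    (j : γ) (v : M) : ∃ g ∈ O, g j ≠ v := by
  by_contra hcon
  push_neg at hcon
  have hEopen : IsOpen (Function.eval j '' O) := isOpenMap_eval j O hO
  have hEne : (Function.eval j '' O).Nonempty := hne.image _
  obtain ⟨a, b, hab, hIoo⟩ := hEopen.exists_Ioo_subset hEne
  obtain ⟨c, hac, hcb⟩ := exists_between hab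
  obtain ⟨c', hac', hc'c⟩ := exists_between hac
  have hsubs : Function.eval j '' O ⊆ {v} := by
    rintro y ⟨g, hg, rfl⟩
    exact hcon g hg
  have h1 : c = v := hsubs (hIoo ⟨hac, hcb⟩)
  have h2 : c' = v := hsubs (hIoo ⟨hac', hc'c.trans hcb⟩)
  exact absurd (h2.trans h1.symm) (ne_of_lt hc'c)

lemma exists_open_avoid (l : List (γ × M)) {O : Set (γ → M)} (hO : IsOpen O)
    (hne : O.Nonempty) :
    ∃ O' : Set (γ → M), IsOpen O' ∧ O'.Nonempty ∧ O' ⊆ O ∧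
      ∀ p ∈ l, ∀ g ∈ O', g p.1 ≠ p.2 := by
  induction l with
  | nil => exact ⟨O, hO, hne, subset_rfl, by simp⟩
  | cons p l ih =>
    obtain ⟨O', hO', hne', hsub', havoid'⟩ := ih
    refine ⟨O' ∩ {g | g p.1 ≠ p.2}, ?_, ?_, fun g hg => hsub' hg.1, ?_⟩
    · refine hO'.inter ?_
      have : {g : γ → M | g p.1 ≠ p.2} = (Function.eval p.1) ⁻¹' (({p.2} : Set M)ᶜ) := rfl
      rw [this]
      exact (isClosed_singleton.isOpen_compl).preimage (continuous_apply p.1)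
    · obtain ⟨g, hg, hgne⟩ := exists_apply_ne_of_isOpen hO' hne' p.1 p.2
      exact ⟨g, hg, hgne⟩
    · rintro r hr g ⟨hg1, hg2⟩
      rcases List.mem_cons.1 hr with rfl | hr'
      · exact hg2
      · exact havoid' r hr' g hg1

end TopoAux

section CylAux

variable {M : Type*} [TopologicalSpace M] {α β : Type*} {c : ℕ}

/-- The cylinder over `A`: coordinates along `σ` lie in `A`, coordinates along `η` are free,
and all remaining coordinates are pinned to the values of `V`. -/
def cylSet (σ : α → β) (η : Fin c → β) (V : β → M) (A : Set (α → M)) : Set (β → M) :=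
  {f | f ∘ σ ∈ A ∧ ∀ j, (∀ a, σ a ≠ j) → (∀ t, η t ≠ j) → f j = V j}

lemma hasDimW_cylSet {σ : α → β} {η : Fin c → β} {V : β → M} {A : Set (α → M)}
    (hσ : Function.Injective σ) (hη : Function.Injective η)
    (hdisj : ∀ a t, σ a ≠ η t) {d : ℕ} (h : HasDimW A d) :
    HasDimW (cylSet σ η V A) (d + c) := by
  classical
  obtain ⟨ρ, hρ, hne⟩ := h
  set e := finSumFinEquiv (m := d) (n := c) with he
  have helim : Function.Injective (Sum.elim (σ ∘ ρ) η) := by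
    rintro (x | x) (y | y) hxy
    · exact congrArg Sum.inl (hρ (hσ hxy))
    · exact absurd hxy (hdisj (ρ x) y)
    · exact absurd hxy.symm (hdisj (ρ y) x)
    · exact congrArg Sum.inr (hη hxy)
  refine ⟨Sum.elim (σ ∘ ρ) η ∘ e.symm, helim.comp e.symm.injective, ?_⟩
  set pA := (fun (x : α → M) (i : Fin d) => x (ρ i)) '' A with hpA
  set π : (Fin (d + c) → M) → (Fin d → M) := fun g' i => g' (e (Sum.inl i)) with hπ
  have hπc : Continuous π := continuous_pi fun i => continuous_apply _
  have hEeq : (fun (f : β → M) (i : Fin (d + c)) => f ((Sum.elim (σ ∘ ρ) η ∘ e.symm) i))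
      '' cylSet σ η V A = π ⁻¹' pA := by
    ext g'
    constructor
    · rintro ⟨f, ⟨hfA, hfpin⟩, rfl⟩
      refine ⟨f ∘ σ, hfA, ?_⟩
      funext i
      simp [π, e]
    · rintro ⟨x, hxA, hxproj⟩
      refine ⟨fun jb => if hx : ∃ a, σ a = jb then x hx.choose
        else if ht : ∃ t, η t = jb then g' (e (Sum.inr ht.choose)) else V jb, ⟨?_, ?_⟩, ?_⟩
      · have hcomp : (fun jb => if hx : ∃ a, σ a = jb then x hx.choose
            else if ht : ∃ t, η t = jb then g' (e (Sum.inr ht.choose)) else V jb) ∘ σ = x := by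
          funext a
          have hx : ∃ a', σ a' = σ a := ⟨a, rfl⟩
          simp only [Function.comp_apply, dif_pos hx]
          rw [hσ hx.choose_spec]
        rw [hcomp]; exact hxA
      · intro jb hnσ hnη
        dsimp only
        rw [dif_neg, dif_neg]
        · push_neg; exact fun t => hnη t
        · push_neg; exact fun a => hnσ a
      · funext j'
        obtain ⟨sidx, rfl⟩ : ∃ sidx, e sidx = j' := ⟨e.symm j', by simp⟩
        rcases sidx with i | t
        all_goals dsimp only
        · have hval : (Sum.elim (σ ∘ ρ) η ∘ e.symm) (e (Sum.inl i)) = σ (ρ i) := by simp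
          rw [hval]
          have hx : ∃ a', σ a' = σ (ρ i) := ⟨ρ i, rfl⟩
          simp only [dif_pos hx]
          rw [hσ hx.choose_spec]
          have := congrFun hxproj i
          simpa [π] using this
        · have hval : (Sum.elim (σ ∘ ρ) η ∘ e.symm) (e (Sum.inr t)) = η t := by simp
          rw [hval]
          have hnσ : ¬ ∃ a, σ a = η t := by
            rintro ⟨a, ha⟩; exact hdisj a t ha
          have ht : ∃ t', η t' = η t := ⟨t, rfl⟩
          simp only [dif_neg hnσ, dif_pos ht]
          rw [hη ht.choose_spec]
  rw [hEeq]
  have hsubint : π ⁻¹' interior pA ⊆ interior (π ⁻¹' pA) :=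
    preimage_interior_subset_interior_preimage hπc
  refine Set.Nonempty.mono hsubint ?_
  obtain ⟨y, hy⟩ := hne
  refine ⟨fun j' => Sum.elim y (fun t => V (η t)) (e.symm j'), ?_⟩
  have hπy : π (fun j' => Sum.elim y (fun t => V (η t)) (e.symm j')) = y := by
    funext i; simp [π]
  simpa [hπy] using hy

lemma hasDimW_of_cylSet [LinearOrder M] [OrderTopology M] [DenselyOrdered M] [Nontrivial M]
    {σ : α → β} {η : Fin c → β} {V : β → M} {A : Set (α → M)}
    (hσ : Function.Injective σ) {d : ℕ} (h : HasDimW (cylSet σ η V A) d) :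
    ∃ dA dF, d = dA + dF ∧ dF ≤ c ∧ HasDimW A dA := by
  classical
  obtain ⟨ρ, hρ, hne⟩ := h
  set PC := (fun (f : β → M) (i : Fin d) => f (ρ i)) '' cylSet σ η V A with hPC
  have hcoverρ : ∀ i : Fin d, (∃ a, σ a = ρ i) ∨ (∃ t, η t = ρ i) := by
    intro i
    by_contra hcon
    push_neg at hcon
    obtain ⟨h1, h2⟩ := hcon
    obtain ⟨g, hgO, hgne⟩ := exists_apply_ne_of_isOpen isOpen_interior hne i (V (ρ i))
    apply hgne
    obtain ⟨f, ⟨-, hfpin⟩, rfl⟩ := interior_subset hgO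
    exact hfpin (ρ i) (fun a => h1 a) (fun t => h2 t)
  set s : Finset (Fin d) := Finset.univ.filter (fun i => ∃ a, σ a = ρ i) with hs
  set dA := s.card with hdA
  have hcard_le : dA ≤ d := le_trans (Finset.card_le_univ s) (by simp)
  refine ⟨dA, d - dA, (Nat.add_sub_cancel' hcard_le).symm, ?_, ?_⟩
  · have hφex : ∀ i ∈ sᶜ, ∃ t, η t = ρ i := by
      intro i hi
      rw [Finset.mem_compl, hs, Finset.mem_filter] at hi
      push_neg at hi
      rcases hcoverρ i with hc1 | hc2
      · obtain ⟨a, ha⟩ := hc1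
        exact absurd ha (hi (Finset.mem_univ i) a)
      · exact hc2
    have hcompl : sᶜ.card = d - dA := by
      rw [Finset.card_compl]; simp [hdA]
    rcases Nat.eq_zero_or_pos c with rfl | hc
    · have hzero : sᶜ = ∅ := Finset.eq_empty_of_forall_notMem fun i hi =>
        (hφex i hi).choose.elim0
      rw [← hcompl, hzero]; simp
    · set φ : Fin d → Fin c := fun i => if hti : ∃ t, η t = ρ i then hti.choose else ⟨0, hc⟩
      have hinj : Set.InjOn φ (sᶜ : Finset (Fin d)) := by
        intro i hi i' hi' hφe
        have hi2 := Finset.mem_coe.1 hi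
        have hi'2 := Finset.mem_coe.1 hi'
        have h1 := (hφex i hi2).choose_spec
        have h2 := (hφex i' hi'2).choose_spec
        have e1 : φ i = (hφex i hi2).choose := dif_pos _
        have e2 : φ i' = (hφex i' hi'2).choose := dif_pos _
        apply hρ
        rw [← h1, ← h2, ← e1, ← e2, hφe]
      have hcc := Finset.card_le_card_of_injOn (t := Finset.univ) φ
        (fun i _ => Finset.mem_univ (φ i)) hinj
      rw [hcompl] at hcc
      simpa using hcc
  · set en : Fin dA → Fin d := fun t => ((s.orderIsoOfFin rfl t : s) : Fin d) with hen
    have hen_inj : Function.Injective en := fun t1 t2 ht =>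
      (s.orderIsoOfFin rfl).injective (Subtype.ext ht)
    have hmemS : ∀ t : Fin dA, en t ∈ s := fun t => (s.orderIsoOfFin rfl t).2
    have hchoice : ∀ t : Fin dA, ∃ a, σ a = ρ (en t) := by
      intro t
      have hm := hmemS t
      rw [hs, Finset.mem_filter] at hm
      exact hm.2
    set ρA : Fin dA → α := fun t => (hchoice t).choose with hρA
    have hρAspec : ∀ t, σ (ρA t) = ρ (en t) := fun t => (hchoice t).choose_spec
    have hρA_inj : Function.Injective ρA := by
      intro t1 t2 ht
      apply hen_inj
      apply hρ
      rw [← hρAspec t1, ← hρAspec t2, ht]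
    refine ⟨ρA, hρA_inj, ?_⟩
    set πs : (Fin d → M) → (Fin dA → M) := fun g => g ∘ en with hπs
    have hopen : IsOpen (πs '' interior PC) := isOpenMap_precomp hen_inj _ isOpen_interior
    have hsubset : πs '' interior PC ⊆ (fun (x : α → M) (t : Fin dA) => x (ρA t)) '' A := by
      rintro y ⟨g, hg, rfl⟩
      obtain ⟨f, ⟨hfA, -⟩, rfl⟩ := interior_subset hg
      refine ⟨f ∘ σ, hfA, ?_⟩
      funext t
      simp only [πs, Function.comp_apply]
      rw [hρAspec t]
    exact (hne.image πs).mono (interior_maximal hsubset hopen)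

end CylAux

lemma definable_eqCoord {L : FirstOrder.Language} {M : Type*} [L.Structure M] {α : Type*}
    (j : α) (v : M) :
    Set.Definable (Set.univ : Set M) L {f : α → M | f j = v} := by
  refine ⟨FirstOrder.Language.Term.equal (FirstOrder.Language.Term.var j)
    ((L.con (⟨v, Set.mem_univ v⟩ : (Set.univ : Set M))).term), ?_⟩
  ext f
  simp [FirstOrder.Language.Formula.realize_equal, FirstOrder.Language.Term.realize_con]


theorem defSecondCountable_of_finite_open_cover
    {L : FirstOrder.Language} {M : Type*} [L.Structure M] [LinearOrder M]
    [DenselyOrdered M] [NoMinOrder M] [NoMaxOrder M] [Nonempty M]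
    [TopologicalSpace M] [OrderTopology M]
    (hM : IsOMinimal L M) {n : ℕ}
    (X : Set (Fin n → M)) (τ : TopologicalSpace ↥X) (hdts : IsDefTopSpace L X τ)
    (m : ℕ) (Xi : Fin m → Set (Fin n → M))
    (hsub : ∀ i, Xi i ⊆ X)
    (hdef : ∀ i, Set.Definable (Set.univ : Set M) L (Xi i))
    (hopen : ∀ i, τ.IsOpen (Subtype.val ⁻¹' Xi i))
    (hcover : X = ⋃ i, Xi i)
    (h2c : ∀ i, DefSecondCountable L (Xi i)
      (TopologicalSpace.induced (fun y : ↥(Xi i) => (⟨y.1, hsub i y.2⟩ : ↥X)) τ)) :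
    DefSecondCountable L X τ := by
  classical
  choose k B T hBdef hTdef hfib hbasis hdimc using h2c
  obtain ⟨q⟩ : Nonempty M := inferInstance
  haveI : Nontrivial M := ⟨⟨q, (exists_gt q).choose, ne_of_lt (exists_gt q).choose_spec⟩⟩
  -- markers
  set p : Fin m → M := fun i => (Infinite.natEmbedding M) i.val with hpdef
  have hpinj : Function.Injective p := by
    intro i j hij
    have h1 : (i : ℕ) = (j : ℕ) := (Infinite.natEmbedding M).injective hij
    exact Fin.ext h1
  -- bound on arities
  set K : ℕ := Finset.univ.sup k with hKdef
  have hkK : ∀ i, k i ≤ K := fun i => Finset.le_sup (Finset.mem_univ i)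
  -- dimensions of the pieces
  have hDex : ∀ i, ∃ Dv : ℕ, Dv ≤ k i ∧ ((B i).Nonempty →
      (HasDimW (B i) Dv ∧ (∀ d', HasDimW (B i) d' → d' ≤ Dv) ∧
        odim (B i) = ((Dv : ℕ∞) : WithBot ℕ∞))) := by
    intro i
    by_cases hne : (B i).Nonempty
    · obtain ⟨Dv, h1, h2, h3⟩ := exists_maxDim hne
      exact ⟨Dv, by simpa using h1.le_card, fun _ => ⟨h1, h2, h3⟩⟩
    · exact ⟨0, Nat.zero_le _, fun h => absurd h hne⟩
  choose D hDk hDspec using hDex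
  have hDK : ∀ i, D i ≤ K := fun i => (hDk i).trans (hkK i)
  set cpd : Fin m → ℕ := fun i => K - D i with hcpddef
  have hcK : ∀ i, cpd i ≤ K := fun i => Nat.sub_le _ _
  have hDc : ∀ i, D i + cpd i = K := fun i => Nat.add_sub_cancel' (hDK i)
  -- structured index type and the combined family
  set σf : (i : Fin m) → Fin (k i) → (Unit ⊕ (Fin m × (Fin K ⊕ Fin K))) :=
    fun i j => Sum.inr (i, Sum.inl (Fin.castLE (hkK i) j)) with hσfdef
  set ηf : (i : Fin m) → Fin (cpd i) → (Unit ⊕ (Fin m × (Fin K ⊕ Fin K))) :=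
    fun i j => Sum.inr (i, Sum.inr (Fin.castLE (hcK i) j)) with hηfdef
  set Vf : Fin m → (Unit ⊕ (Fin m × (Fin K ⊕ Fin K))) → M :=
    fun i => Sum.elim (fun _ => p i) (fun _ => q) with hVfdef
  have hσinj : ∀ i, Function.Injective (σf i) := by
    intro i a b hab
    simp only [hσfdef, Sum.inr.injEq, Prod.mk.injEq, Sum.inl.injEq, true_and] at hab
    exact Fin.ext (by simpa using congrArg Fin.val hab)
  have hηinj : ∀ i, Function.Injective (ηf i) := by
    intro i a b hab
    simp only [hηfdef, Sum.inr.injEq, Prod.mk.injEq, Sum.inr.injEq, true_and] at hab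
    exact Fin.ext (by simpa using congrArg Fin.val hab)
  have hdisjf : ∀ i a t, σf i a ≠ ηf i t := by
    intro i a t h
    simp only [hσfdef, hηfdef, Sum.inr.injEq, Prod.mk.injEq, true_and] at h
    exact Sum.inl_ne_inr h
  set blk : (i : Fin m) → Set ((Unit ⊕ (Fin m × (Fin K ⊕ Fin K))) → M) :=
    fun i => cylSet (σf i) (ηf i) (Vf i) (B i) with hblkdef
  set BI : Set ((Unit ⊕ (Fin m × (Fin K ⊕ Fin K))) → M) := ⋃ i, blk i with hBIdef
  set TI : Set (((Unit ⊕ (Fin m × (Fin K ⊕ Fin K))) ⊕ Fin n) → M) :=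
    ⋃ i, ({g | g ∘ Sum.inl ∈ blk i} ∩ (fun g => g ∘ Sum.map (σf i) id) ⁻¹' (T i)) with hTIdef
  -- markers distinguish the blocks
  have hmarker : ∀ i f, f ∈ blk i → f (Sum.inl ()) = p i := by
    intro i f hf
    have := hf.2 (Sum.inl ()) (fun a => by simp [hσfdef]) (fun t => by simp [hηfdef])
    simpa [hVfdef] using this
  have huniq : ∀ i i' f, f ∈ blk i → f ∈ blk i' → i = i' := by
    intro i i' f hf hf'
    apply hpinj
    rw [← hmarker i f hf, ← hmarker i' f hf']
  -- fibers of the combined family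
  have helimI : ∀ (b : (Unit ⊕ (Fin m × (Fin K ⊕ Fin K))) → M) (a : Fin n → M) (i : Fin m),
      (Sum.elim b a) ∘ Sum.map (σf i) id = Sum.elim (b ∘ σf i) a := by
    intro b a i
    funext z
    cases z <;> rfl
  have hfibTI : ∀ i b, b ∈ blk i → fiberAt TI b = fiberAt (T i) (b ∘ σf i) := by
    intro i b hb
    ext a
    simp only [fiberAt, Set.mem_setOf_eq, hTIdef, Set.mem_iUnion, Set.mem_inter_iff,
      Set.mem_preimage]
    constructor
    · rintro ⟨i', hmem, hT⟩
      have hbb : (Sum.elim b a) ∘ Sum.inl = b := funext fun z => rfl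
      rw [hbb] at hmem
      have hii : i' = i := huniq i' i b hmem hb
      subst hii
      rwa [helimI b a i'] at hT
    · intro hT
      refine ⟨i, ?_, ?_⟩
      · show (Sum.elim b a) ∘ Sum.inl ∈ blk i
        have hbb : (Sum.elim b a) ∘ Sum.inl = b := funext fun z => rfl
        rw [hbb]; exact hb
      · rw [helimI b a i]; exact hT
  -- extension of codes
  have hext : ∀ i, ∀ b' ∈ B i, ∃ b ∈ blk i, b ∘ σf i = b' := by
    intro i b' hb'
    have hcomp : (fun j => if hx : ∃ a, σf i a = j then b' hx.choose else Vf i j) ∘ σf i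
        = b' := by
      funext a
      have hx : ∃ a', σf i a' = σf i a := ⟨a, rfl⟩
      simp only [Function.comp_apply, dif_pos hx]
      rw [hσinj i hx.choose_spec]
    refine ⟨fun j => if hx : ∃ a, σf i a = j then b' hx.choose else Vf i j, ⟨?_, ?_⟩, hcomp⟩
    · rw [hcomp]; exact hb'
    · intro j hnσ _
      dsimp only
      rw [dif_neg]
      push_neg
      exact fun a => hnσ a
  -- the union-dimension bound
  have hUB : ∀ dd : ℕ, HasDimW BI dd → dd ≤ K := by
    intro dd hdd
    obtain ⟨ρ, hρ, hne⟩ := hdd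
    rcases Nat.eq_zero_or_pos dd with rfl | hddpos
    · exact Nat.zero_le K
    have himg : (fun (f : (Unit ⊕ (Fin m × (Fin K ⊕ Fin K))) → M) (i' : Fin dd) => f (ρ i'))
        '' BI = ⋃ i, (fun f (i' : Fin dd) => f (ρ i')) '' blk i := by
      rw [hBIdef, Set.image_iUnion]
    set P : Fin m → Set (Fin dd → M) :=
      fun i => (fun f (i' : Fin dd) => f (ρ i')) '' blk i with hPdef
    set Bad : Fin m → Prop :=
      fun i => ∃ j : Fin dd, (∀ a, σf i a ≠ ρ j) ∧ (∀ t, ηf i t ≠ ρ j) with hBaddef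
    set j₀ : Fin dd := ⟨0, hddpos⟩ with hj₀
    set pr : Fin m → Fin dd × M :=
      fun i => if h : Bad i then (h.choose, Vf i (ρ h.choose)) else (j₀, q) with hprdef
    set l : List (Fin dd × M) := (List.finRange m).map pr with hldef
    obtain ⟨O', hOopen, hOone, hOosub, havoid⟩ := exists_open_avoid l isOpen_interior hne
    have hnotbad : ∀ g ∈ O', ∀ i, g ∈ P i → ¬ Bad i := by
      intro g hg i hgP hbad
      have hpr : pr i = (hbad.choose, Vf i (ρ hbad.choose)) := dif_pos hbad
      have hmem : pr i ∈ l := List.mem_map.2 ⟨i, List.mem_finRange i, rfl⟩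
      have hne' := havoid _ hmem g hg
      rw [hpr] at hne'
      obtain ⟨f, hf, rfl⟩ := hgP
      exact hne' (hf.2 _ hbad.choose_spec.1 hbad.choose_spec.2)
    have htag : ∀ i, ¬ Bad i → ∀ j : Fin dd, ∃ w, ρ j = Sum.inr (i, w) := by
      intro i hgood j
      by_cases h1 : ∃ a, σf i a = ρ j
      · obtain ⟨a, ha⟩ := h1
        exact ⟨Sum.inl (Fin.castLE (hkK i) a), ha.symm⟩
      · have h2 : ∃ t, ηf i t = ρ j := by
          by_contra h2
          exact hgood ⟨j, fun a ha => h1 ⟨a, ha⟩, fun t ht => h2 ⟨t, ht⟩⟩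
        obtain ⟨t, ht⟩ := h2
        exact ⟨Sum.inr (Fin.castLE (hcK i) t), ht.symm⟩
    have hOounion : O' ⊆ ⋃ i, P i := fun g hg => by
      have := interior_subset (hOosub hg)
      rwa [himg] at this
    obtain ⟨g0, hg0⟩ := id hOone
    obtain ⟨i₀, hi₀⟩ := Set.mem_iUnion.1 (hOounion hg0)
    have hgood₀ : ¬ Bad i₀ := hnotbad g0 hg0 i₀ hi₀
    have hOoP : O' ⊆ P i₀ := by
      intro g hg
      obtain ⟨i₁, hi₁⟩ := Set.mem_iUnion.1 (hOounion hg)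
      have hgood₁ := hnotbad g hg i₁ hi₁
      obtain ⟨w0, hw0⟩ := htag i₀ hgood₀ j₀
      obtain ⟨w1, hw1⟩ := htag i₁ hgood₁ j₀
      rw [hw0] at hw1
      simp only [Sum.inr.injEq, Prod.mk.injEq] at hw1
      rwa [← hw1.1] at hi₁
    have hblkdim : HasDimW (blk i₀) dd :=
      ⟨ρ, hρ, hOone.mono (interior_maximal hOoP hOopen)⟩
    obtain ⟨dA, dF, hsum, hdF, hA⟩ := hasDimW_of_cylSet (hσinj i₀) hblkdim
    have hBne : (B i₀).Nonempty := hA.nonempty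
    have hdA := (hDspec i₀ hBne).2.1 dA hA
    have := hDc i₀
    omega
  -- transfer to `Fin N`
  set N : ℕ := Fintype.card (Unit ⊕ (Fin m × (Fin K ⊕ Fin K))) with hNdef
  set e : (Unit ⊕ (Fin m × (Fin K ⊕ Fin K))) ≃ Fin N :=
    Fintype.equivFin (Unit ⊕ (Fin m × (Fin K ⊕ Fin K))) with hedef
  set Bfin : Set (Fin N → M) := (fun g : Fin N → M => g ∘ ⇑e) ⁻¹' BI with hBfindef
  set Tfin : Set ((Fin N ⊕ Fin n) → M) :=
    (fun g : (Fin N ⊕ Fin n) → M => g ∘ Sum.map (⇑e) id) ⁻¹' TI with hTfindef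
  have hfibfin : ∀ b : Fin N → M, fiberAt Tfin b = fiberAt TI (b ∘ ⇑e) := by
    intro b
    ext a
    simp only [fiberAt, Set.mem_setOf_eq, hTfindef, Set.mem_preimage]
    have hh : (Sum.elim b a) ∘ Sum.map (⇑e) id = Sum.elim (b ∘ ⇑e) a := by
      funext z; cases z <;> rfl
    rw [hh]
  -- definability
  have hblkDef : ∀ i, Set.Definable (Set.univ : Set M) L (blk i) := by
    intro i
    have h1 : Set.Definable (Set.univ : Set M) L
        ((fun f : (Unit ⊕ (Fin m × (Fin K ⊕ Fin K))) → M => f ∘ σf i) ⁻¹' B i) :=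
      (hBdef i).preimage_comp (σf i)
    set pin : Finset (Unit ⊕ (Fin m × (Fin K ⊕ Fin K))) :=
      Finset.univ.filter (fun jb => (∀ a, σf i a ≠ jb) ∧ (∀ t, ηf i t ≠ jb)) with hpindef
    have heq : blk i = ((fun f => f ∘ σf i) ⁻¹' B i) ∩
        ⋂ jb ∈ pin, {f : (Unit ⊕ (Fin m × (Fin K ⊕ Fin K))) → M | f jb = Vf i jb} := by
      ext f
      simp only [hblkdef, cylSet, Set.mem_setOf_eq, Set.mem_inter_iff, Set.mem_preimage,
        Set.mem_iInter, hpindef, Finset.mem_filter, Finset.mem_univ, true_and]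
      constructor
      · rintro ⟨hfA, hfpin⟩
        exact ⟨hfA, fun jb hjb => hfpin jb hjb.1 hjb.2⟩
      · rintro ⟨hfA, hfpin⟩
        exact ⟨hfA, fun jb h1' h2' => hfpin jb ⟨h1', h2'⟩⟩
    rw [heq]
    exact h1.inter (Set.definable_biInter_finset (fun jb => definable_eqCoord jb (Vf i jb)) pin)
  have hBIDef : Set.Definable (Set.univ : Set M) L BI := by
    have huniv : BI = ⋃ i ∈ (Finset.univ : Finset (Fin m)), blk i := by
      simp [hBIdef]
    rw [huniv]
    exact Set.definable_biUnion_finset (fun i => hblkDef i) _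
  have hTIDef : Set.Definable (Set.univ : Set M) L TI := by
    have huniv : TI = ⋃ i ∈ (Finset.univ : Finset (Fin m)),
        ({g | g ∘ Sum.inl ∈ blk i} ∩ (fun g => g ∘ Sum.map (σf i) id) ⁻¹' (T i)) := by
      simp [hTIdef]
    rw [huniv]
    refine Set.definable_biUnion_finset (fun i => ?_) _
    exact ((hblkDef i).preimage_comp Sum.inl).inter ((hTdef i).preimage_comp (Sum.map (σf i) id))
  refine ⟨N, Bfin, Tfin, hBIDef.preimage_comp ⇑e, hTIDef.preimage_comp (Sum.map ⇑e id), ?_, ?_, ?_⟩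
  · -- fibers contained in X
    intro b hb
    obtain ⟨i, hbi⟩ := Set.mem_iUnion.1 (Set.mem_preimage.1 hb)
    rw [hfibfin b, hfibTI i _ hbi]
    exact (hfib i _ hbi.1).trans (hsub i)
  · -- basis
    letI : TopologicalSpace ↥X := τ
    have hfamily : (fun b => (Subtype.val ⁻¹' fiberAt Tfin b : Set ↥X)) '' Bfin
        = (fun bI => (Subtype.val ⁻¹' fiberAt TI bI : Set ↥X)) '' BI := by
      ext S
      constructor
      · rintro ⟨b, hb, rfl⟩
        refine ⟨b ∘ ⇑e, hb, ?_⟩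
        dsimp only
        rw [hfibfin]
      · rintro ⟨bI, hbI, rfl⟩
        have hre : (bI ∘ ⇑e.symm) ∘ ⇑e = bI := by funext z; simp
        refine ⟨bI ∘ ⇑e.symm, ?_, ?_⟩
        · show (bI ∘ ⇑e.symm) ∘ ⇑e ∈ BI
          rw [hre]; exact hbI
        · dsimp only
          rw [hfibfin, hre]
    rw [hfamily]
    -- openness of the members
    have hopen_fib : ∀ i, ∀ b' ∈ B i,
        IsOpen (Subtype.val ⁻¹' fiberAt (T i) b' : Set ↥X) := by
      intro i b' hb'
      letI : TopologicalSpace ↥(Xi i) :=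
        TopologicalSpace.induced (fun y : ↥(Xi i) => (⟨y.1, hsub i y.2⟩ : ↥X)) τ
      have hmem : (Subtype.val ⁻¹' fiberAt (T i) b' : Set ↥(Xi i)) ∈
          (fun b => (Subtype.val ⁻¹' fiberAt (T i) b : Set ↥(Xi i))) '' B i :=
        Set.mem_image_of_mem _ hb'
      have hopen_i := (hbasis i).isOpen hmem
      rw [isOpen_induced_iff] at hopen_i
      obtain ⟨W, hW, hWeq⟩ := hopen_i
      have hXeq : (Subtype.val ⁻¹' fiberAt (T i) b' : Set ↥X)
          = W ∩ (Subtype.val ⁻¹' Xi i) := by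
        ext z
        constructor
        · intro hz
          have hzXi : z.1 ∈ Xi i := hfib i b' hb' hz
          have hz2 : (⟨z.1, hzXi⟩ : ↥(Xi i)) ∈
              (fun y : ↥(Xi i) => (⟨y.1, hsub i y.2⟩ : ↥X)) ⁻¹' W := by
            rw [hWeq]; exact hz
          have hz3 : (⟨z.1, hsub i hzXi⟩ : ↥X) ∈ W := hz2
          have hzz : (⟨z.1, hsub i hzXi⟩ : ↥X) = z := Subtype.ext rfl
          rw [hzz] at hz3
          exact ⟨hz3, hzXi⟩
        · rintro ⟨hzW, hzXi⟩
          have hzz : (⟨z.1, hsub i hzXi⟩ : ↥X) = z := Subtype.ext rfl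
          have hz2 : (⟨z.1, hzXi⟩ : ↥(Xi i)) ∈
              (fun y : ↥(Xi i) => (⟨y.1, hsub i y.2⟩ : ↥X)) ⁻¹' W := by
            show (⟨z.1, hsub i hzXi⟩ : ↥X) ∈ W
            rw [hzz]; exact hzW
          rw [hWeq] at hz2
          exact hz2
      rw [hXeq]
      exact hW.inter (hopen i)
    refine TopologicalSpace.isTopologicalBasis_of_isOpen_of_nhds ?_ ?_
    · rintro u ⟨bI, hbI, rfl⟩
      obtain ⟨i, hbi⟩ := Set.mem_iUnion.1 hbI
      dsimp only
      rw [hfibTI i _ hbi]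
      exact hopen_fib i _ hbi.1
    · intro xh U hxU hU
      have hx : xh.1 ∈ ⋃ i, Xi i := by rw [← hcover]; exact xh.2
      obtain ⟨i, hxi⟩ := Set.mem_iUnion.1 hx
      letI : TopologicalSpace ↥(Xi i) :=
        TopologicalSpace.induced (fun y : ↥(Xi i) => (⟨y.1, hsub i y.2⟩ : ↥X)) τ
      have hUo : IsOpen ((fun y : ↥(Xi i) => (⟨y.1, hsub i y.2⟩ : ↥X)) ⁻¹' U) :=
        isOpen_induced_iff.2 ⟨U, hU, rfl⟩
      have hxU' : (⟨xh.1, hxi⟩ : ↥(Xi i)) ∈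
          (fun y : ↥(Xi i) => (⟨y.1, hsub i y.2⟩ : ↥X)) ⁻¹' U := by
        show (⟨xh.1, hsub i hxi⟩ : ↥X) ∈ U
        have hzz : (⟨xh.1, hsub i hxi⟩ : ↥X) = xh := Subtype.ext rfl
        rw [hzz]; exact hxU
      obtain ⟨Vb, hVmem, hxV, hVsub⟩ := (hbasis i).exists_subset_of_mem_open hxU' hUo
      obtain ⟨b', hb', rfl⟩ := hVmem
      obtain ⟨bI, hbImem, hbeq⟩ := hext i b' hb'
      have hfibeq : fiberAt TI bI = fiberAt (T i) b' := by
        rw [hfibTI i bI hbImem, hbeq]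
      refine ⟨Subtype.val ⁻¹' fiberAt TI bI, ⟨bI, Set.mem_iUnion.2 ⟨i, hbImem⟩, rfl⟩, ?_, ?_⟩
      · show xh.1 ∈ fiberAt TI bI
        rw [hfibeq]
        exact hxV
      · intro z hz
        have hz1 : z.1 ∈ fiberAt (T i) b' := by rw [← hfibeq]; exact hz
        have hzXi : z.1 ∈ Xi i := hfib i b' hb' hz1
        have hz2 : (⟨z.1, hzXi⟩ : ↥(Xi i)) ∈ (Subtype.val ⁻¹' fiberAt (T i) b') := hz1
        have hz3 := hVsub hz2
        have hzz : (⟨z.1, hsub i hzXi⟩ : ↥X) = z := Subtype.ext rfl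
        show z ∈ U
        rw [← hzz]
        exact hz3
  · -- the dimension condition
    intro x hxX b hb hxfib
    have hbIBI : b ∘ ⇑e ∈ BI := hb
    obtain ⟨i, hbblk⟩ := Set.mem_iUnion.1 hbIBI
    have hb' : (b ∘ ⇑e) ∘ σf i ∈ B i := hbblk.1
    have hfibeq : fiberAt TI (b ∘ ⇑e) = fiberAt (T i) ((b ∘ ⇑e) ∘ σf i) :=
      hfibTI i _ hbblk
    have hxfib' : x ∈ fiberAt (T i) ((b ∘ ⇑e) ∘ σf i) := by
      rw [← hfibeq, ← hfibfin]; exact hxfib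
    have hxXi : x ∈ Xi i := hfib i _ hb' hxfib'
    set LI : Set ((Unit ⊕ (Fin m × (Fin K ⊕ Fin K))) → M) :=
      {cI | cI ∈ BI ∧ x ∈ fiberAt TI cI ∧ fiberAt TI cI ⊆ fiberAt TI (b ∘ ⇑e)} with hLIdef
    have hLeq : {c | c ∈ Bfin ∧ x ∈ fiberAt Tfin c ∧ fiberAt Tfin c ⊆ fiberAt Tfin b}
        = (fun g : Fin N → M => g ∘ ⇑e) ⁻¹' LI := by
      ext cf
      simp only [Set.mem_setOf_eq, Set.mem_preimage, hLIdef, hfibfin cf, hfibfin b]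
      rfl
    rw [hLeq, odim_reindex e LI]
    have hBeq : odim Bfin = odim BI := odim_reindex e BI
    rw [hBeq]
    -- the local family of the i-th piece
    set Li : Set (Fin (k i) → M) :=
      {c' | c' ∈ B i ∧ x ∈ fiberAt (T i) c' ∧
        fiberAt (T i) c' ⊆ fiberAt (T i) ((b ∘ ⇑e) ∘ σf i)} with hLidef
    have hLiodim : odim Li = odim (B i) := hdimc i x hxXi ((b ∘ ⇑e) ∘ σf i) hb' hxfib'
    have hBine : (B i).Nonempty := ⟨_, hb'⟩
    obtain ⟨hDdim, hDmax, hDodim⟩ := hDspec i hBine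
    have hLine : Li.Nonempty := ⟨(b ∘ ⇑e) ∘ σf i, hb', hxfib', subset_rfl⟩
    obtain ⟨D', hD'1, hD'2, hD'3⟩ := exists_maxDim hLine
    have hD'D : D' = D i := by
      rw [hD'3, hDodim] at hLiodim
      exact_mod_cast hLiodim
    have hLidim : HasDimW Li (D i) := hD'D ▸ hD'1
    have hcylsub : cylSet (σf i) (ηf i) (Vf i) Li ⊆ LI := by
      intro f hf
      have hfblk : f ∈ blk i := ⟨hf.1.1, hf.2⟩
      have hffib : fiberAt TI f = fiberAt (T i) (f ∘ σf i) := hfibTI i f hfblk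
      refine ⟨Set.mem_iUnion.2 ⟨i, hfblk⟩, ?_, ?_⟩
      · rw [hffib]; exact hf.1.2.1
      · rw [hffib, hfibeq]; exact hf.1.2.2
    have hLIK : HasDimW LI K := by
      have hc1 := hasDimW_cylSet (V := Vf i) (hσinj i) (hηinj i) (hdisjf i) hLidim
      rw [hDc i] at hc1
      exact hc1.mono hcylsub
    have hBIK : HasDimW BI K := by
      have hc1 := hasDimW_cylSet (V := Vf i) (hσinj i) (hηinj i) (hdisjf i) hDdim
      rw [hDc i] at hc1
      exact hc1.mono (fun f hf => Set.mem_iUnion.2 ⟨i, hf⟩)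
    have hLsub : LI ⊆ BI := fun cI hc => hc.1
    rw [odim_eq_of_hasDimW hLIK (fun dd hdd => hUB dd (hdd.mono hLsub)),
      odim_eq_of_hasDimW hBIK hUB]
end

section
/- Let M be an o-minimal expansion of (ℝ, <). Let X ⊆ ℝ^n be a non-empty definable set and let C be a countable family (not necessarily definable) of definable subsets of X, each of o-minimal dimension strictly less than dim X. Then C is not a cover of X, i.e. ⋃C ⊊ X. -/
open FirstOrder Set TopologicalSpace

theorem def_subst {L : FirstOrder.Language} [L.Structure ℝ] {α β : Type} {s : Set (α → ℝ)}
    (hs : Set.Definable (Set.univ : Set ℝ) L s) (σ : α → β ⊕ ℝ) :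
    Set.Definable (Set.univ : Set ℝ) L {v : β → ℝ | (fun a => Sum.elim v id (σ a)) ∈ s} := by
  obtain ⟨φ, rfl⟩ := hs
  refine ⟨φ.subst (fun a => Sum.rec (fun b => FirstOrder.Language.Term.var b)
    (fun r => ((L.con (⟨r, Set.mem_univ r⟩ : (Set.univ : Set ℝ))).term)) (σ a)), ?_⟩
  ext v
  have key : (fun a => FirstOrder.Language.Term.realize v
      (Sum.rec (fun b => FirstOrder.Language.Term.var b)
        (fun r => ((L.con (⟨r, Set.mem_univ r⟩ : (Set.univ : Set ℝ))).term)) (σ a)))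
      = fun a => Sum.elim v id (σ a) := by
    funext a
    rcases σ a with b | r <;> simp
  simp only [Set.mem_setOf_eq, FirstOrder.Language.Formula.Realize,
    FirstOrder.Language.BoundedFormula.realize_subst, key]

theorem def_const_lt {L : FirstOrder.Language} [L.Structure ℝ]
    (hlt : Set.Definable (Set.univ : Set ℝ) L {p : Fin 2 → ℝ | p 0 < p 1})
    (r : ℝ) {m : ℕ} (i : Fin m) :
    Set.Definable (Set.univ : Set ℝ) L {v : Fin m → ℝ | r < v i} := by
  convert def_subst hlt (fun a : Fin 2 => if a = 0 then Sum.inr r else Sum.inl i) using 1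
  ext v; simp

theorem def_lt_const {L : FirstOrder.Language} [L.Structure ℝ]
    (hlt : Set.Definable (Set.univ : Set ℝ) L {p : Fin 2 → ℝ | p 0 < p 1})
    (r : ℝ) {m : ℕ} (i : Fin m) :
    Set.Definable (Set.univ : Set ℝ) L {v : Fin m → ℝ | v i < r} := by
  convert def_subst hlt (fun a : Fin 2 => if a = 0 then Sum.inl i else Sum.inr r) using 1
  ext v; simp

/-- every nonempty open subset of `Fin k → ℝ` contains a nonempty open box around any
of its points -/
theorem exists_box_subset {k : ℕ} {U : Set (Fin k → ℝ)} (hU : IsOpen U) {x : Fin k → ℝ}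
    (hx : x ∈ U) : ∃ a b : Fin k → ℝ, (∀ i, a i < b i) ∧
      x ∈ Set.univ.pi (fun i => Set.Ioo (a i) (b i)) ∧
      Set.univ.pi (fun i => Set.Ioo (a i) (b i)) ⊆ U := by
  obtain ⟨ε, hε, hball⟩ := Metric.isOpen_iff.mp hU x hx
  refine ⟨fun i => x i - ε / 2, fun i => x i + ε / 2, fun i => by linarith, ?_, ?_⟩
  · intro i _
    constructor <;> simp <;> linarith
  · intro y hy
    apply hball
    rw [Metric.mem_ball, dist_pi_lt_iff hε]
    intro i
    have := hy i (Set.mem_univ i)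
    rw [Real.dist_eq, abs_sub_lt_iff]
    simp only [Set.mem_Ioo] at this
    constructor <;> linarith

theorem box_nonempty {k : ℕ} {a b : Fin k → ℝ} (h : ∀ i, a i < b i) :
    (Set.univ.pi (fun i => Set.Ioo (a i) (b i))).Nonempty := by
  refine ⟨fun i => (a i + b i) / 2, fun i _ => ?_⟩
  constructor <;> [skip; skip] <;> · have := h i; simp; linarith

theorem box_isOpen {k : ℕ} (a b : Fin k → ℝ) :
    IsOpen (Set.univ.pi (fun i => Set.Ioo (a i) (b i))) :=
  isOpen_set_pi Set.finite_univ (fun _ _ => isOpen_Ioo)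
theorem omin_finite {L : FirstOrder.Language} [L.Structure ℝ]
    (hM2 : ∀ s : Set (Fin 1 → ℝ), Set.Definable (Set.univ : Set ℝ) L s →
      ∃ t : Finset (Set ℝ), (∀ u ∈ t, IsIntervalOrPoint u) ∧
        (fun v : Fin 1 → ℝ => v 0) '' s = ⋃ u ∈ t, (u : Set ℝ))
    {s : Set (Fin 1 → ℝ)} (hs : Set.Definable (Set.univ : Set ℝ) L s)
    (hint : interior ((fun v : Fin 1 → ℝ => v 0) '' s) = ∅) :
    ((fun v : Fin 1 → ℝ => v 0) '' s).Finite := by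
  obtain ⟨t, ht, himg⟩ := hM2 s hs
  rw [himg]
  refine Set.Finite.biUnion t.finite_toSet (fun u hu => ?_)
  have husub : u ⊆ (fun v : Fin 1 → ℝ => v 0) '' s := by
    rw [himg]; intro y hy; exact Set.mem_biUnion hu hy
  have key : ∀ w : Set ℝ, IsOpen w → w ⊆ u → w = ∅ := by
    intro w hw hwu
    by_contra hne
    obtain ⟨z, hz⟩ := Set.nonempty_iff_ne_empty.mpr hne
    have : z ∈ interior ((fun v : Fin 1 → ℝ => v 0) '' s) :=
      interior_mono (hwu.trans husub) ((hw.subset_interior_iff.mpr subset_rfl) hz)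
    rw [hint] at this
    exact this
  rcases ht u hu with ⟨c, rfl⟩ | ⟨c, d, rfl⟩ | ⟨c, rfl⟩ | ⟨c, rfl⟩ | rfl
  · exact Set.finite_singleton c
  · rw [key _ isOpen_Ioo subset_rfl]; exact Set.finite_empty
  · exact absurd (key _ isOpen_Ioi subset_rfl) (Set.nonempty_iff_ne_empty.mp ⟨c + 1, by simp⟩)
  · exact absurd (key _ isOpen_Iio subset_rfl) (Set.nonempty_iff_ne_empty.mp ⟨c - 1, by simp⟩)
  · exact absurd (key _ isOpen_univ subset_rfl) (Set.nonempty_iff_ne_empty.mp ⟨0, trivial⟩)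

theorem omin_dense_interval {L : FirstOrder.Language} [L.Structure ℝ]
    (hM2 : ∀ s : Set (Fin 1 → ℝ), Set.Definable (Set.univ : Set ℝ) L s →
      ∃ t : Finset (Set ℝ), (∀ u ∈ t, IsIntervalOrPoint u) ∧
        (fun v : Fin 1 → ℝ => v 0) '' s = ⋃ u ∈ t, (u : Set ℝ))
    {s : Set (Fin 1 → ℝ)} (hs : Set.Definable (Set.univ : Set ℝ) L s)
    {al bl : ℝ} (hab : al < bl)
    (hdense : ∀ r q : ℚ, al < r → (r : ℝ) < q → (q : ℝ) < bl →
      ∃ y ∈ (fun v : Fin 1 → ℝ => v 0) '' s, (r : ℝ) < y ∧ y < q) :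
    ∃ c d : ℚ, (c : ℝ) < d ∧ Set.Ioo (c : ℝ) (d : ℝ) ⊆ (fun v : Fin 1 → ℝ => v 0) '' s := by
  set S := (fun v : Fin 1 → ℝ => v 0) '' s with hS
  by_cases hint : (interior S).Nonempty
  · obtain ⟨c', d', hcd', hsub⟩ := isOpen_interior.exists_Ioo_subset hint
    obtain ⟨c, hc1, hc2⟩ := exists_rat_btwn hcd'
    obtain ⟨d, hd1, hd2⟩ := exists_rat_btwn hc2
    exact ⟨c, d, hd1, fun y hy => interior_subset (hsub ⟨hc1.trans hy.1, hy.2.trans hd2⟩)⟩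
  · exfalso
    have hfin : S.Finite := omin_finite hM2 hs (Set.not_nonempty_iff_eq_empty.mp hint)
    obtain ⟨u, hu1, hu2⟩ := exists_rat_btwn hab
    obtain ⟨v, hv1, hv2⟩ := exists_rat_btwn hu2
    have hne : (S ∩ Set.Ioo (u : ℝ) (v : ℝ)).Nonempty := by
      obtain ⟨y, hy, hy1, hy2⟩ := hdense u v hu1 hv1 hv2
      exact ⟨y, hy, hy1, hy2⟩
    obtain ⟨m, hm, hmin⟩ := Set.exists_min_image _ id (hfin.inter_of_left _) hne
    obtain ⟨r, hr1, hr2⟩ := exists_rat_btwn hm.2.1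
    obtain ⟨q, hq1, hq2⟩ := exists_rat_btwn hr2
    obtain ⟨y, hy, hy1, hy2⟩ := hdense r q (hu1.trans hr1) hq1 (hq2.trans (hm.2.2.trans hv2))
    have hyIoo : y ∈ S ∩ Set.Ioo (u : ℝ) (v : ℝ) :=
      ⟨hy, hr1.trans hy1, hy2.trans (hq2.trans hm.2.2)⟩
    exact absurd (hmin y hyIoo) (by simp only [id]; push_neg; exact hy2.trans hq2)
theorem mem_proj_iff {k : ℕ} (P : Set (Fin (k + 1) → ℝ)) (x : Fin k → ℝ) :
    x ∈ (fun g : Fin (k + 1) → ℝ => g ∘ Fin.castSucc) '' P ↔ ∃ y : ℝ, Fin.snoc x y ∈ P := by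
  constructor
  · rintro ⟨v, hv, rfl⟩
    refine ⟨v (Fin.last k), ?_⟩
    have : Fin.snoc (v ∘ Fin.castSucc) (v (Fin.last k)) = v := Fin.snoc_init_self v
    rwa [this]
  · rintro ⟨y, hy⟩
    refine ⟨Fin.snoc x y, hy, ?_⟩
    funext i
    simp [Fin.snoc_castSucc]

/-- the set of `x` such that some `y ∈ (r, q)` has `snoc x y ∈ D` -/
def projS {k : ℕ} (D : Set (Fin (k + 1) → ℝ)) (r q : ℝ) : Set (Fin k → ℝ) :=
  (fun g : Fin (k + 1) → ℝ => g ∘ Fin.castSucc) ''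
    (D ∩ {v | r < v (Fin.last k)} ∩ {v | v (Fin.last k) < q})

theorem mem_projS_iff {k : ℕ} (D : Set (Fin (k + 1) → ℝ)) (r q : ℝ) (x : Fin k → ℝ) :
    x ∈ projS D r q ↔ ∃ y : ℝ, r < y ∧ y < q ∧ Fin.snoc x y ∈ D := by
  rw [projS, mem_proj_iff]
  constructor
  · rintro ⟨y, ⟨⟨h1, h2⟩, h3⟩⟩
    rw [Set.mem_setOf_eq, Fin.snoc_last] at h2 h3
    exact ⟨y, h2, h3, h1⟩
  · rintro ⟨y, h1, h2, h3⟩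
    exact ⟨y, ⟨⟨h3, by rw [Set.mem_setOf_eq, Fin.snoc_last]; exact h1⟩,
      by rw [Set.mem_setOf_eq, Fin.snoc_last]; exact h2⟩⟩

theorem projS_definable {L : FirstOrder.Language} [L.Structure ℝ]
    (hlt : Set.Definable (Set.univ : Set ℝ) L {p : Fin 2 → ℝ | p 0 < p 1})
    {k : ℕ} {D : Set (Fin (k + 1) → ℝ)} (hD : Set.Definable (Set.univ : Set ℝ) L D)
    (r q : ℝ) : Set.Definable (Set.univ : Set ℝ) L (projS D r q) :=
  ((hD.inter (def_const_lt hlt r _)).inter (def_lt_const hlt q _)).image_comp Fin.castSucc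

/-- the set of `x` such that every `y ∈ (r, q)` has `snoc x y ∈ D` -/
def projT {k : ℕ} (D : Set (Fin (k + 1) → ℝ)) (r q : ℝ) : Set (Fin k → ℝ) :=
  ((fun g : Fin (k + 1) → ℝ => g ∘ Fin.castSucc) ''
    (({v | r < v (Fin.last k)} ∩ {v | v (Fin.last k) < q}) ∩ Dᶜ))ᶜ

theorem mem_projT_iff {k : ℕ} (D : Set (Fin (k + 1) → ℝ)) (r q : ℝ) (x : Fin k → ℝ) :
    x ∈ projT D r q ↔ ∀ y : ℝ, r < y → y < q → Fin.snoc x y ∈ D := by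
  rw [projT, Set.mem_compl_iff, mem_proj_iff]
  constructor
  · intro h y h1 h2
    by_contra hc
    exact h ⟨y, ⟨⟨by rwa [Set.mem_setOf_eq, Fin.snoc_last],
      by rwa [Set.mem_setOf_eq, Fin.snoc_last]⟩, hc⟩⟩
  · rintro h ⟨y, ⟨⟨h1, h2⟩, h3⟩⟩
    rw [Set.mem_setOf_eq, Fin.snoc_last] at h1 h2
    exact h3 (h y h1 h2)

theorem projT_definable {L : FirstOrder.Language} [L.Structure ℝ]
    (hlt : Set.Definable (Set.univ : Set ℝ) L {p : Fin 2 → ℝ | p 0 < p 1})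
    {k : ℕ} {D : Set (Fin (k + 1) → ℝ)} (hD : Set.Definable (Set.univ : Set ℝ) L D)
    (r q : ℝ) : Set.Definable (Set.univ : Set ℝ) L (projT D r q) :=
  ((((def_const_lt hlt r _).inter (def_lt_const hlt q _)).inter hD.compl).image_comp
    Fin.castSucc).compl

/-- fibers are definable -/
theorem fiber_definable {L : FirstOrder.Language} [L.Structure ℝ]
    {k : ℕ} {D : Set (Fin (k + 1) → ℝ)} (hD : Set.Definable (Set.univ : Set ℝ) L D)
    (x : Fin k → ℝ) :
    Set.Definable (Set.univ : Set ℝ) L {w : Fin 1 → ℝ | Fin.snoc x (w 0) ∈ D} := by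
  convert def_subst hD
    (fun i : Fin (k + 1) => Fin.lastCases (Sum.inl (0 : Fin 1)) (fun j => Sum.inr (x j)) i)
    using 1
  ext w
  simp only [Set.mem_setOf_eq]
  have : (fun i : Fin (k + 1) => Sum.elim w id
      (Fin.lastCases (Sum.inl (0 : Fin 1)) (fun j => Sum.inr (x j)) i)) = Fin.snoc x (w 0) := by
    funext i
    refine Fin.lastCases ?_ (fun j => ?_) i
    · simp [Fin.lastCases_last, Fin.snoc_last]
    · simp [Fin.lastCases_castSucc, Fin.snoc_castSucc]
  rw [this]

theorem mem_fiber_image_iff {k : ℕ} (D : Set (Fin (k + 1) → ℝ)) (x : Fin k → ℝ) (y : ℝ) :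
    y ∈ (fun v : Fin 1 → ℝ => v 0) '' {w : Fin 1 → ℝ | Fin.snoc x (w 0) ∈ D} ↔
      Fin.snoc x y ∈ D := by
  constructor
  · rintro ⟨w, hw, rfl⟩; exact hw
  · intro h; exact ⟨fun _ => y, h, rfl⟩
/-- In an o-minimal expansion of `(ℝ, <)`, a definable set with empty interior is
nowhere dense. -/
theorem omin_nwd {L : FirstOrder.Language} [L.Structure ℝ] (hM : IsOMinimal L ℝ) :
    ∀ (k : ℕ) (D : Set (Fin k → ℝ)), Set.Definable (Set.univ : Set ℝ) L D →
      interior D = ∅ → interior (closure D) = ∅ := by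
  intro k
  induction k with
  | zero =>
    intro D hD hint
    rcases D.eq_empty_or_nonempty with rfl | ⟨x, hx⟩
    · simp
    · exfalso
      have hDuniv : D = Set.univ := Set.eq_univ_of_forall fun y => by
        have : y = x := funext fun i => i.elim0
        rwa [this]
      rw [hDuniv, interior_univ] at hint
      exact (Set.eq_empty_iff_forall_notMem.mp hint) x (Set.mem_univ x)
  | succ k ih =>
    intro D hD hint
    by_contra hne
    obtain ⟨z, hz⟩ := Set.nonempty_iff_ne_empty.mpr hne
    obtain ⟨a, b, hab, hzmem, hbox⟩ := exists_box_subset isOpen_interior hz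
    have hbig : Set.univ.pi (fun i => Set.Ioo (a i) (b i)) ⊆ closure D :=
      hbox.trans interior_subset
    set al := a (Fin.last k) with hal
    set bl := b (Fin.last k) with hbl
    have halb : al < bl := hab _
    set B : Set (Fin k → ℝ) :=
      Set.univ.pi (fun i => Set.Ioo (a i.castSucc) (b i.castSucc)) with hBdefn
    have hBopen : IsOpen B := box_isOpen _ _
    have hBne : B.Nonempty := box_nonempty (fun i => hab _)
    have hBdef : Set.Definable (Set.univ : Set ℝ) L B := by
      have hBeq : B = ⋂ i ∈ Finset.univ,
          ({x : Fin k → ℝ | a (Fin.castSucc i) < x i} ∩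
            {x : Fin k → ℝ | x i < b (Fin.castSucc i)}) := by
        ext x
        simp [hBdefn, Set.mem_pi]
      rw [hBeq]
      exact Set.definable_biInter_finset
        (fun i => (def_const_lt hM.1 _ i).inter (def_lt_const hM.1 _ i)) _
    -- membership of snoc in the big box
    have hsnoc_mem : ∀ (x : Fin k → ℝ) (y : ℝ), x ∈ B → al < y → y < bl →
        Fin.snoc x y ∈ Set.univ.pi (fun i => Set.Ioo (a i) (b i)) := by
      intro x y hx h1 h2 i _
      refine Fin.lastCases ?_ (fun j => ?_) i
      · rw [Fin.snoc_last]; exact ⟨h1, h2⟩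
      · rw [Fin.snoc_castSucc]; exact hx j (Set.mem_univ j)
    -- density of projS slices
    have hSint : ∀ r q : ℝ, al < r → r < q → q < bl →
        interior ((projS D r q)ᶜ ∩ B) = ∅ := by
      intro r q h1 h2 h3
      by_contra hne'
      obtain ⟨x, hx⟩ := Set.nonempty_iff_ne_empty.mpr hne'
      obtain ⟨a', b', hab', hx', hsub'⟩ := exists_box_subset isOpen_interior hx
      set B' : Set (Fin k → ℝ) := Set.univ.pi (fun i => Set.Ioo (a' i) (b' i)) with hB'defn
      have hB'sub : B' ⊆ (projS D r q)ᶜ ∩ B := hsub'.trans interior_subset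
      set P' : Set (Fin (k + 1) → ℝ) :=
        (fun v : Fin (k + 1) → ℝ => v ∘ Fin.castSucc) ⁻¹' B' ∩
          (fun v : Fin (k + 1) → ℝ => v (Fin.last k)) ⁻¹' Set.Ioo r q with hP'defn
      have hP'open : IsOpen P' :=
        ((box_isOpen a' b').preimage (continuous_pi fun i => continuous_apply _)).inter
          (isOpen_Ioo.preimage (continuous_apply _))
      have hP'ne : P'.Nonempty := by
        obtain ⟨x0, hx0⟩ := box_nonempty hab'
        refine ⟨Fin.snoc x0 ((r + q) / 2), ?_, ?_⟩
        · have hmm : (Fin.snoc x0 ((r + q) / 2) : Fin (k+1) → ℝ) ∘ Fin.castSucc = x0 := by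
            funext j; simp [Fin.snoc_castSucc]
          exact Set.mem_preimage.mpr (by rw [hmm]; exact hx0)
        · simp only [Set.mem_preimage, Fin.snoc_last, Set.mem_Ioo]
          constructor <;> linarith
      have hP'sub : P' ⊆ closure D := by
        intro v hv
        apply hbig
        have hv1 : v ∘ Fin.castSucc ∈ B' := hv.1
        have hv2 : v (Fin.last k) ∈ Set.Ioo r q := hv.2
        intro i _
        refine Fin.lastCases ?_ (fun j => ?_) i
        · exact ⟨h1.trans hv2.1, hv2.2.trans h3⟩
        · exact (hB'sub hv1).2 j (Set.mem_univ j)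
      obtain ⟨v0, hv0⟩ := hP'ne
      obtain ⟨v, hvP, hvD⟩ := _root_.mem_closure_iff.mp (hP'sub hv0) P' hP'open hv0
      have hvS : (v ∘ Fin.castSucc) ∈ projS D r q := by
        rw [mem_projS_iff]
        refine ⟨v (Fin.last k), hvP.2.1, hvP.2.2, ?_⟩
        have : Fin.snoc (v ∘ Fin.castSucc) (v (Fin.last k)) = v := Fin.snoc_init_self v
        rwa [this]
      exact (hB'sub hvP.1).1 hvS
    classical
    by_cases hT : ∃ c d : ℚ, (c : ℝ) < (d : ℝ) ∧ (interior (projT D c d)).Nonempty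
    · -- some T has interior: D has interior, contradiction
      obtain ⟨c, d, hcd, x0, hx0⟩ := hT
      obtain ⟨a'', b'', hab'', hx'', hsub''⟩ := exists_box_subset isOpen_interior hx0
      set B'' : Set (Fin k → ℝ) := Set.univ.pi (fun i => Set.Ioo (a'' i) (b'' i))
      have hB''sub : B'' ⊆ projT D c d := hsub''.trans interior_subset
      set P'' : Set (Fin (k + 1) → ℝ) :=
        (fun v : Fin (k + 1) → ℝ => v ∘ Fin.castSucc) ⁻¹' B'' ∩
          (fun v : Fin (k + 1) → ℝ => v (Fin.last k)) ⁻¹' Set.Ioo (c : ℝ) (d : ℝ)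
      have hP''open : IsOpen P'' :=
        ((box_isOpen a'' b'').preimage (continuous_pi fun i => continuous_apply _)).inter
          (isOpen_Ioo.preimage (continuous_apply _))
      have hP''ne : P''.Nonempty := by
        obtain ⟨x1, hx1⟩ := box_nonempty hab''
        refine ⟨Fin.snoc x1 (((c : ℝ) + d) / 2), ?_, ?_⟩
        · have hmm : (Fin.snoc x1 (((c : ℝ) + d) / 2) : Fin (k+1) → ℝ) ∘ Fin.castSucc = x1 := by
            funext j; simp [Fin.snoc_castSucc]
          exact Set.mem_preimage.mpr (by rw [hmm]; exact hx1)
        · simp only [Set.mem_preimage, Fin.snoc_last, Set.mem_Ioo]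
          constructor <;> linarith
      have hP''D : P'' ⊆ D := by
        intro v hv
        have hthis := (mem_projT_iff D (c : ℝ) (d : ℝ) (v ∘ Fin.castSucc)).mp (hB''sub hv.1)
          (v (Fin.last k)) hv.2.1 hv.2.2
        have h2 : Fin.snoc (v ∘ Fin.castSucc) (v (Fin.last k)) = v := Fin.snoc_init_self v
        rwa [h2] at hthis
      have : P'' ⊆ interior D := hP''open.subset_interior_iff.mpr hP''D
      rw [hint] at this
      exact (Set.eq_empty_iff_forall_notMem.mp (Set.subset_empty_iff.mp this))
        hP''ne.choose hP''ne.choose_spec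
    · push_neg at hT
      have hTint : ∀ c d : ℚ, (c : ℝ) < (d : ℝ) → interior (projT D c d) = ∅ := hT
      set f : (ℚ × ℚ) ⊕ (ℚ × ℚ) → Set (Fin k → ℝ) := fun i =>
        match i with
        | .inl (r, q) =>
          if al < (r : ℝ) ∧ (r : ℝ) < (q : ℝ) ∧ (q : ℝ) < bl then
            (closure ((projS D r q)ᶜ ∩ B))ᶜ else Set.univ
        | .inr (c, d) =>
          if (c : ℝ) < (d : ℝ) then (closure (projT D c d))ᶜ else Set.univ
        with hfdefn
      have hfo : ∀ i, IsOpen (f i) := by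
        rintro (⟨r, q⟩ | ⟨c, d⟩) <;> simp only [hfdefn] <;> split_ifs <;>
          first
          | exact isClosed_closure.isOpen_compl
          | exact isOpen_univ
      have hfd : ∀ i, Dense (f i) := by
        rintro (⟨r, q⟩ | ⟨c, d⟩) <;> simp only [hfdefn]
        · split_ifs with h
          · exact interior_eq_empty_iff_dense_compl.mp
              (ih _ ((projS_definable hM.1 hD r q).compl.inter hBdef)
                (hSint r q h.1 h.2.1 h.2.2))
          · exact dense_univ
        · split_ifs with h
          · exact interior_eq_empty_iff_dense_compl.mp
              (ih _ (projT_definable hM.1 hD c d) (hTint c d h))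
          · exact dense_univ
      obtain ⟨xs, hxsI, hxsB⟩ :=
        (dense_iInter_of_isOpen hfo hfd).exists_mem_open hBopen hBne
      have hxsS : ∀ r q : ℚ, al < (r : ℝ) → (r : ℝ) < (q : ℝ) → (q : ℝ) < bl →
          xs ∈ projS D r q := by
        intro r q h1 h2 h3
        have hmem : xs ∈ (if al < (r : ℝ) ∧ (r : ℝ) < (q : ℝ) ∧ (q : ℝ) < bl then
            (closure ((projS D (r : ℝ) (q : ℝ))ᶜ ∩ B))ᶜ else Set.univ) :=
          Set.mem_iInter.mp hxsI (Sum.inl (r, q))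
        rw [if_pos (show al < (r : ℝ) ∧ (r : ℝ) < (q : ℝ) ∧ (q : ℝ) < bl from ⟨h1, h2, h3⟩)]
          at hmem
        by_contra hc
        exact hmem (subset_closure ⟨hc, hxsB⟩)
      obtain ⟨c, d, hcd, hIoo⟩ :=
        omin_dense_interval hM.2 (fiber_definable hD xs) halb
          (by
            intro r q h1 h2 h3
            obtain ⟨y, hy1, hy2, hy3⟩ := (mem_projS_iff D r q xs).mp (hxsS r q h1 h2 h3)
            exact ⟨y, (mem_fiber_image_iff D xs y).mpr hy3, hy1, hy2⟩)
      have hxsT : xs ∈ projT D c d := by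
        rw [mem_projT_iff]
        intro y hy1 hy2
        exact (mem_fiber_image_iff D xs y).mp (hIoo ⟨hy1, hy2⟩)
      have hmem : xs ∈ (if (c : ℝ) < (d : ℝ) then (closure (projT D (c : ℝ) (d : ℝ)))ᶜ
          else Set.univ) := Set.mem_iInter.mp hxsI (Sum.inr (c, d))
      rw [if_pos hcd] at hmem
      exact hmem (subset_closure hxsT)

/-- Let `M` be an o-minimal expansion of `(ℝ, <)`, `X ⊆ ℝ^n` a non-empty
definable set, and `C` a countable (not necessarily definable) family of definable subsets
of `X`, each of dimension strictly less than `dim X`. Then `C` does not cover `X`. -/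
theorem countable_union_of_lower_dim_ne
    {L : FirstOrder.Language} [L.Structure ℝ]
    (hM : IsOMinimal L ℝ) {n : ℕ}
    (X : Set (Fin n → ℝ)) (hX : Set.Definable (Set.univ : Set ℝ) L X) (hne : X.Nonempty)
    (C : Set (Set (Fin n → ℝ))) (hcount : C.Countable)
    (hmem : ∀ s ∈ C, s ⊆ X ∧ Set.Definable (Set.univ : Set ℝ) L s ∧ odim s < odim X) :
    ⋃₀ C ⊂ X := by
  have hsub : ⋃₀ C ⊆ X := Set.sUnion_subset fun s hs => (hmem s hs).1
  set W : Set ℕ := {k | ∃ ρ : Fin k → Fin n, Function.Injective ρ ∧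
      (interior ((fun (x : Fin n → ℝ) (i : Fin k) => x (ρ i)) '' X)).Nonempty} with hW
  have h0W : 0 ∈ W := by
    refine ⟨Fin.elim0, fun i => i.elim0, ?_⟩
    have himg : ((fun (x : Fin n → ℝ) (i : Fin 0) => x (Fin.elim0 i)) '' X).Nonempty :=
      hne.image _
    have heq : ((fun (x : Fin n → ℝ) (i : Fin 0) => x (Fin.elim0 i)) '' X) = Set.univ := by
      obtain ⟨w, hw⟩ := himg
      refine Set.eq_univ_of_forall fun y => ?_
      have : y = w := Subsingleton.elim _ _
      rwa [this]
    rw [heq, interior_univ]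
    exact ⟨fun i => i.elim0, Set.mem_univ _⟩
  have hWbdd : BddAbove W := by
    refine ⟨n, ?_⟩
    rintro k ⟨ρ, hρ, -⟩
    simpa using Fintype.card_le_of_injective ρ hρ
  have hk0 : sSup W ∈ W := Nat.sSup_mem ⟨0, h0W⟩ hWbdd
  set k0 := sSup W with hk0defn
  obtain ⟨ρ, hρinj, hUne⟩ := hk0
  have hXle : odim X ≤ ((k0 : ℕ∞) : WithBot ℕ∞) := by
    apply sSup_le
    rintro d ⟨k, rfl, ρ', hρ', hne'⟩
    have hk : k ≤ k0 := le_csSup hWbdd ⟨ρ', hρ', hne'⟩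
    exact_mod_cast hk
  have hCproj : ∀ s ∈ C, interior ((fun (x : Fin n → ℝ) (i : Fin k0) => x (ρ i)) '' s) = ∅ := by
    intro s hs
    by_contra hc
    have hle : ((k0 : ℕ∞) : WithBot ℕ∞) ≤ odim s :=
      le_sSup ⟨k0, rfl, ρ, hρinj, Set.nonempty_iff_ne_empty.mpr hc⟩
    exact absurd ((hmem s hs).2.2.trans_le hXle) (not_lt.mpr hle)
  have hnwd : ∀ s ∈ C,
      Dense ((closure ((fun (x : Fin n → ℝ) (i : Fin k0) => x (ρ i)) '' s))ᶜ) := by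
    intro s hs
    refine interior_eq_empty_iff_dense_compl.mp (omin_nwd hM k0 _ ?_ (hCproj s hs))
    exact ((hmem s hs).2.1).image_comp ρ
  haveI : Countable ↥C := hcount.to_subtype
  have hdense : Dense (⋂ s : C,
      (closure ((fun (x : Fin n → ℝ) (i : Fin k0) => x (ρ i)) '' (s : Set (Fin n → ℝ))))ᶜ) :=
    dense_iInter_of_isOpen (fun s => isClosed_closure.isOpen_compl) (fun s => hnwd s s.2)
  obtain ⟨u, huI, huU⟩ := hdense.exists_mem_open isOpen_interior hUne
  obtain ⟨x, hxX, hxu⟩ := interior_subset huU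
  rw [Set.ssubset_iff_of_subset hsub]
  refine ⟨x, hxX, ?_⟩
  rintro ⟨s, hsC, hxs⟩
  have h1 : u ∈ (closure ((fun (x : Fin n → ℝ) (i : Fin k0) => x (ρ i)) '' s))ᶜ :=
    Set.mem_iInter.mp huI ⟨s, hsC⟩
  exact h1 (subset_closure ⟨x, hxs, hxu⟩)
end

section
/- Suppose the first-order structure M has definable choice. A definable topological space (X, τ) is hereditarily definably separable if and only if it does not contain an infinite definable subset whose subspace topology is discrete. -/
open FirstOrder Set TopologicalSpace

/-- `(X, τ)` is hereditarily definably separable: every definable subspace of `(X, τ)`,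
with the subspace topology, is definably separable. -/
def HereditarilyDefSeparable (L : FirstOrder.Language) {M : Type*} [L.Structure M] {n : ℕ}
    (X : Set (Fin n → M)) (τ : TopologicalSpace ↥X) : Prop :=
  ∀ (Y : Set (Fin n → M)) (hYX : Y ⊆ X), Set.Definable (Set.univ : Set M) L Y →
    DefSeparable L Y (TopologicalSpace.induced (fun y : ↥Y => (⟨y.1, hYX y.2⟩ : ↥X)) τ)

/-- `(X, τ)` contains an infinite definable subset whose subspace topology is discrete. -/
def HasInfiniteDefDiscreteSubspace (L : FirstOrder.Language) {M : Type*} [L.Structure M]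
    {n : ℕ} (X : Set (Fin n → M)) (τ : TopologicalSpace ↥X) : Prop :=
  ∃ (Y : Set (Fin n → M)) (hYX : Y ⊆ X), Set.Definable (Set.univ : Set M) L Y ∧
    Y.Infinite ∧
    TopologicalSpace.induced (fun y : ↥Y => (⟨y.1, hYX y.2⟩ : ↥X)) τ = ⊥

/-- `M` has definable choice: for every definable family of non-empty sets
`{A_b : b ∈ B}` there is a definable map `f` with `f b ∈ A_b` for all `b ∈ B` and
`f b = f c` whenever `A_b = A_c`. -/
def HasDefinableChoice (L : FirstOrder.Language) (M : Type*) [L.Structure M] : Prop :=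
  ∀ (k n : ℕ) (B : Set (Fin k → M)) (T : Set ((Fin k ⊕ Fin n) → M)),
    Set.Definable (Set.univ : Set M) L B → Set.Definable (Set.univ : Set M) L T →
    (∀ b ∈ B, (fiberAt T b).Nonempty) →
    ∃ f : (Fin k → M) → (Fin n → M),
      Set.Definable (Set.univ : Set M) L
        {p : (Fin k ⊕ Fin n) → M | (p ∘ Sum.inl) ∈ B ∧ p ∘ Sum.inr = f (p ∘ Sum.inl)} ∧
      (∀ b ∈ B, f b ∈ fiberAt T b) ∧
      (∀ b ∈ B, ∀ c ∈ B, fiberAt T b = fiberAt T c → f b = f c)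


/-- Every set is open in the bottom (discrete) topology. -/
lemma bot_isOpen {α : Type*} (s : Set α) : (⊥ : TopologicalSpace α).IsOpen s := by
  letI : TopologicalSpace α := ⊥
  haveI : DiscreteTopology α := ⟨rfl⟩
  exact isOpen_discrete s

/-- The diagonal-type set `{p | p ∘ Sum.inr = p ∘ Sum.inl}` is definable. -/
lemma definable_eq_sum {L : FirstOrder.Language} {M : Type*} [L.Structure M] {n : ℕ} :
    Set.Definable (Set.univ : Set M) L
      {p : (Fin n ⊕ Fin n) → M | p ∘ Sum.inr = p ∘ Sum.inl} := by
  have h : {p : (Fin n ⊕ Fin n) → M | p ∘ Sum.inr = p ∘ Sum.inl}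
      = ⋂ i ∈ Finset.univ,
          {p : (Fin n ⊕ Fin n) → M | p (Sum.inr i) = p (Sum.inl i)} := by
    ext p
    simp [funext_iff, Function.comp]
  rw [h]
  refine Set.definable_biInter_finset (fun i => ?_) _
  exact ⟨Language.Term.equal (Language.Term.var (Sum.inr i)) (Language.Term.var (Sum.inl i)),
    by ext p; simp⟩

/-- Suppose `M` has definable choice. A definable topological space
`(X, τ)` is hereditarily definably separable if and only if it does not contain an infinite
definable subset whose subspace topology is discrete. -/
theorem hereditarilyDefSeparable_iff_no_infinite_def_discrete
    {L : FirstOrder.Language} {M : Type*} [L.Structure M]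
    (hchoice : HasDefinableChoice L M) {n : ℕ}
    (X : Set (Fin n → M)) (τ : TopologicalSpace ↥X)
    (hXdef : Set.Definable (Set.univ : Set M) L X)
    (hdts : ∃ (k : ℕ) (B : Set (Fin k → M)) (T : Set ((Fin k ⊕ Fin n) → M)),
      Set.Definable (Set.univ : Set M) L B ∧ Set.Definable (Set.univ : Set M) L T ∧
      (∀ b ∈ B, fiberAt T b ⊆ X) ∧
      @TopologicalSpace.IsTopologicalBasis ↥X τ
        ((fun b => (Subtype.val ⁻¹' fiberAt T b : Set ↥X)) '' B)) :
    HereditarilyDefSeparable L X τ ↔ ¬ HasInfiniteDefDiscreteSubspace L X τ := by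
  constructor
  · rintro hsep ⟨Y, hYX, hYdef, hYinf, hbot⟩
    set T : Set ((Fin n ⊕ Fin n) → M) :=
      ((fun g : (Fin n ⊕ Fin n) → M => g ∘ Sum.inl) ⁻¹' Y) ∩
        {p | p ∘ Sum.inr = p ∘ Sum.inl} with hT
    have hfib : ∀ b ∈ Y, fiberAt T b = {b} := by
      intro b hb
      ext a
      simp only [fiberAt, hT, Set.mem_inter_iff, Set.mem_preimage, Set.mem_setOf_eq,
        Sum.elim_comp_inl, Sum.elim_comp_inr, Set.mem_singleton_iff]
      exact ⟨fun h => h.2, fun h => ⟨hb, h⟩⟩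
    refine hsep Y hYX hYdef ⟨n, Y, T, hYdef, (hYdef.preimage_comp Sum.inl).inter
      definable_eq_sum, ?_, ?_, ?_⟩
    · intro b hb
      rw [hfib b hb]
      refine ⟨Set.singleton_subset_iff.2 hb, ?_⟩
      rw [hbot]
      exact bot_isOpen _
    · intro b hb c hc hne
      rw [hfib b hb, hfib c hc] at hne ⊢
      simp only [ne_eq, Set.singleton_eq_singleton_iff] at hne
      simpa using hne
    · have heq : {s : Set (Fin n → M) | ∃ b ∈ Y, s = fiberAt T b}
          = (fun b => ({b} : Set (Fin n → M))) '' Y := by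
        ext s
        constructor
        · rintro ⟨b, hb, rfl⟩
          exact ⟨b, hb, (hfib b hb).symm⟩
        · rintro ⟨b, hb, rfl⟩
          exact ⟨b, hb, (hfib b hb).symm⟩
      rw [heq]
      exact hYinf.image (fun a _ b _ h => Set.singleton_eq_singleton_iff.1 h)
  · rintro hno Y hYX hYdef ⟨k, B, T, hBdef, hTdef, hopen, hdisj, hinf⟩
    set B' : Set (Fin k → M) := B ∩ ((fun g : (Fin k ⊕ Fin n) → M => g ∘ Sum.inl) '' T)
      with hB'
    have hmemB' : ∀ b, b ∈ B' ↔ b ∈ B ∧ (fiberAt T b).Nonempty := by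
      intro b
      simp only [hB', Set.mem_inter_iff, Set.mem_image, and_congr_right_iff]
      intro _
      constructor
      · rintro ⟨g, hg, rfl⟩
        refine ⟨g ∘ Sum.inr, ?_⟩
        have hgg : Sum.elim (g ∘ Sum.inl) (g ∘ Sum.inr) = g := by
          funext x; cases x <;> rfl
        simpa [fiberAt, hgg] using hg
      · rintro ⟨a, ha⟩
        exact ⟨Sum.elim b a, ha, by funext i; rfl⟩
    have hB'def : Set.Definable (Set.univ : Set M) L B' :=
      hBdef.inter (hTdef.image_comp Sum.inl)
    obtain ⟨f, hSdef, hmem, hcong⟩ := hchoice k n B' T hB'def hTdef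
      (fun b hb => ((hmemB' b).1 hb).2)
    set Z : Set (Fin n → M) :=
      (fun g : (Fin k ⊕ Fin n) → M => g ∘ Sum.inr) ''
        {p : (Fin k ⊕ Fin n) → M | (p ∘ Sum.inl) ∈ B' ∧ p ∘ Sum.inr = f (p ∘ Sum.inl)}
      with hZdefn
    have hmemZ : ∀ a, a ∈ Z ↔ ∃ b ∈ B', a = f b := by
      intro a
      constructor
      · rintro ⟨p, ⟨hp1, hp2⟩, rfl⟩
        exact ⟨p ∘ Sum.inl, hp1, hp2⟩
      · rintro ⟨b, hb, rfl⟩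
        exact ⟨Sum.elim b (f b), ⟨by simpa using hb, by simp⟩, by simp⟩
    have hZdef : Set.Definable (Set.univ : Set M) L Z := hSdef.image_comp Sum.inr
    have hZY : Z ⊆ Y := by
      rintro a ha
      obtain ⟨b, hb, rfl⟩ := (hmemZ a).1 ha
      exact (hopen b ((hmemB' b).1 hb).1).1 (hmem b hb)
    have hZX : Z ⊆ X := hZY.trans hYX
    -- the set of distinct nonempty fibers is infinite
    have hF'inf : {s : Set (Fin n → M) | ∃ b ∈ B', s = fiberAt T b}.Infinite := by
      intro hfin
      apply hinf
      refine (hfin.insert ∅).subset ?_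
      rintro s ⟨b, hb, rfl⟩
      rcases Set.eq_empty_or_nonempty (fiberAt T b) with he | hne
      · exact Set.mem_insert_iff.2 (Or.inl he)
      · exact Set.mem_insert_iff.2 (Or.inr ⟨b, (hmemB' b).2 ⟨hb, hne⟩, rfl⟩)
    have hkey : ∀ b ∈ B', ∀ b' ∈ B', f b = f b' → fiberAt T b = fiberAt T b' := by
      intro b hb b' hb' hfe
      by_contra hne
      exact Set.disjoint_left.1
        (hdisj b ((hmemB' b).1 hb).1 b' ((hmemB' b').1 hb').1 hne)
        (hmem b hb) (hfe ▸ hmem b' hb')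
    -- Z is infinite
    have hZinf : Z.Infinite := by
      choose bf hbf1 hbf2 using
        fun s : ↥{s : Set (Fin n → M) | ∃ b ∈ B', s = fiberAt T b} => s.2
      haveI : Infinite ↥{s : Set (Fin n → M) | ∃ b ∈ B', s = fiberAt T b} :=
        hF'inf.to_subtype
      refine Set.infinite_of_injective_forall_mem
        (f := fun s : ↥{s : Set (Fin n → M) | ∃ b ∈ B', s = fiberAt T b} =>
          f (bf s)) ?_ ?_
      · intro s s' h
        apply Subtype.ext
        rw [hbf2 s, hbf2 s', hkey _ (hbf1 s) _ (hbf1 s') h]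
      · intro s
        exact (hmemZ _).2 ⟨bf s, hbf1 s, rfl⟩
    -- Z is discrete
    have hdisc : TopologicalSpace.induced
        (fun z : ↥Z => (⟨z.1, hZX z.2⟩ : ↥X)) τ = ⊥ := by
      refine eq_bot_of_singletons_open (fun z => ?_)
      obtain ⟨b, hb, hzb⟩ := (hmemZ z.1).1 z.2
      obtain ⟨V, hV, hVeq⟩ := isOpen_induced_iff.1 (hopen b ((hmemB' b).1 hb).1).2
      refine isOpen_induced_iff.2 ⟨V, hV, ?_⟩
      ext z'
      obtain ⟨b', hb', hzb'⟩ := (hmemZ z'.1).1 z'.2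
      have hy' : (⟨z'.1, hZX z'.2⟩ : ↥X) ∈ V ↔ z'.1 ∈ fiberAt T b := by
        have h2 := Set.ext_iff.1 hVeq ⟨z'.1, hZY z'.2⟩
        simpa using h2
      simp only [Set.mem_preimage, Set.mem_singleton_iff, hy']
      constructor
      · intro hmemfib
        by_cases hfe : fiberAt T b' = fiberAt T b
        · have hfbe := hcong b' hb' b hb hfe
          apply Subtype.ext
          rw [hzb', hfbe, hzb]
        · exact absurd (by rw [hzb']; exact hmem b' hb')
            (Set.disjoint_right.1
              (hdisj b' ((hmemB' b').1 hb').1 b ((hmemB' b).1 hb).1 hfe) hmemfib)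
      · intro h
        rw [h, hzb]
        exact hmem b hb
    exact hno ⟨Z, hZX, hZdef, hZinf, hdisc⟩
end
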